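/- arXiv:1311.4951 — 12 statements merged into one kernel-verified Lean document; each statement's English description precedes it below -/
import Mathlib

section
/- Let (X, ⪯) be a set with a transitive binary relation, x₀ ∈ X with S(x₀) := {x ∈ X : x ⪯ x₀} nonempty, and η : X → ℝ ∪ {±∞} monotone with respect to ⪯ (i.e., x₁ ⪯ x₂ implies η(x₁) ≤ η(x₂)). Suppose: (A) −∞ < inf{η(x) : x ∈ S(x₀)} < +∞; (B) for any x ∈ S(x₀) with −∞ < η(x) < +∞ and any x′ ∈ S(x) \ {x}, η(x) > η(x′); (C) for any sequence (xₙ) ⊂ S(x₀) with xₙ ∈ S(xₙ₋₁) for all n and η(xₙ) − inf{η(x) : x ∈ S(xₙ₋₁)} → 0, there exists u ∈ X with u ∈ S(xₙ) for all n. Then there exists x̂ ∈ X such that x̂ ∈ S(x₀) and S(x̂) ⊆ {x̂}. -/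
/-!
If every `S(x)` with `x ∈ S(x₀)` is nonempty, then by (A) and monotonicity all the infima
`inf η(S(x))` met along a chain started at a point of finite value are finite, so one can choose
`xₙ₊₁ ∈ S(xₙ)` with `η(xₙ₊₁) < inf η(S(xₙ)) + 1/(n+1)`. By (C) some `u` lies below the whole chain.
For `w ∈ S(u)` we get `η(u) - η(w) ≤ η(xₙ₊₁) - inf η(S(xₙ)) → 0`, so `η(u) ≤ η(w)`, and (B) then
forces `S(u) ⊆ {u}`.
-/

open Filter Topology

theorem EReal.exists_lt_sInf_add {s : Set EReal} (hbot : ⊥ < sInf s) (htop : sInf s < ⊤)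
    {ε : ℝ} (hε : 0 < ε) : ∃ a ∈ s, a < sInf s + ε := by
  refine sInf_lt_iff.1 ?_
  lift sInf s to ℝ using ⟨htop.ne, hbot.ne'⟩ with I
  exact_mod_cast lt_add_of_pos_right I hε

theorem exists_seq_of_forall_exists_step {X : Type*} {P : X → Prop} {Q : ℕ → X → X → Prop}
    {x₀ : X} (h₀ : P x₀) (hstep : ∀ n x, P x → ∃ y, P y ∧ Q n x y) :
    ∃ xs : ℕ → X, (∀ n, P (xs n)) ∧ ∀ n, Q n (xs n) (xs (n + 1)) := by
  choose! f hfP hfQ using hstep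
  let xs : ℕ → X := fun n => Nat.rec x₀ f n
  have hP : ∀ n, P (xs n) := by
    intro n
    induction n with
    | zero => exact h₀
    | succ n ih => exact hfP n _ ih
  exact ⟨xs, hP, fun n => hfQ n _ (hP n)⟩

section LowerSets

variable {X : Type*} {S : X → Set X} {η : X → EReal}

theorem exists_seq_tendsto_sub_sInf (hS : ∀ x, ∀ y ∈ S x, S y ⊆ S x)
    (hη : ∀ x, ∀ y ∈ S x, η y ≤ η x) {x₀ : X} (hbot : ⊥ < sInf (η '' S x₀))
    (htop : sInf (η '' S x₀) < ⊤) (hne : ∀ x ∈ S x₀, (S x).Nonempty) :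
    ∃ xs : ℕ → X, (∀ n, xs n ∈ S x₀ ∧ η (xs n) < ⊤) ∧ (∀ n, xs (n + 1) ∈ S (xs n)) ∧
      Tendsto (fun n => η (xs (n + 1)) - sInf (η '' S (xs n))) atTop (𝓝 0) := by
  have hInf : ∀ x ∈ S x₀, η x < ⊤ → ⊥ < sInf (η '' S x) ∧ sInf (η '' S x) < ⊤ := by
    intro x hx hxtop
    obtain ⟨y, hy⟩ := hne x hx
    exact ⟨hbot.trans_le (sInf_le_sInf (Set.image_mono (hS x₀ x hx))),
      ((sInf_le (Set.mem_image_of_mem η hy)).trans (hη x y hy)).trans_lt hxtop⟩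
  obtain ⟨_, ⟨y₀, hy₀, rfl⟩, hy₀top⟩ := sInf_lt_iff.1 htop
  obtain ⟨xs, hxs, hstep⟩ := exists_seq_of_forall_exists_step
    (P := fun x => x ∈ S x₀ ∧ η x < ⊤)
    (Q := fun n x y => y ∈ S x ∧ η y - sInf (η '' S x) < ((1 / (n + 1) : ℝ) : EReal))
    ⟨hy₀, hy₀top⟩ <| by
      rintro n x ⟨hx, hxtop⟩
      obtain ⟨_, ⟨y, hy, rfl⟩, hlt⟩ := EReal.exists_lt_sInf_add (hInf x hx hxtop).1
        (hInf x hx hxtop).2 (ε := 1 / (n + 1)) (by positivity)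
      exact ⟨y, ⟨hS x₀ x hx hy, (hη x y hy).trans_lt hxtop⟩, hy, EReal.sub_lt_of_lt_add' hlt⟩
  refine ⟨xs, hxs, fun n => (hstep n).1, ?_⟩
  have hε : Tendsto (fun n : ℕ => ((1 / (n + 1) : ℝ) : EReal)) atTop (𝓝 0) := by
    simpa using EReal.tendsto_coe.2 tendsto_one_div_add_atTop_nhds_zero_nat
  refine tendsto_of_tendsto_of_tendsto_of_le_of_le tendsto_const_nhds hε (fun n => ?_)
    (fun n => (hstep n).2.le)
  exact (EReal.sub_nonneg (.inl (hxs (n + 1)).2.ne) (.inr (hInf _ (hxs n).1 (hxs n).2).1.ne')).2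
    (sInf_le (Set.mem_image_of_mem η (hstep n).1))

theorem le_of_tendsto_sub_sInf (hS : ∀ x, ∀ y ∈ S x, S y ⊆ S x)
    (hη : ∀ x, ∀ y ∈ S x, η y ≤ η x) {xs : ℕ → X}
    (hgap : Tendsto (fun n => η (xs (n + 1)) - sInf (η '' S (xs n))) atTop (𝓝 0))
    {u : X} (hu : ∀ n, u ∈ S (xs n)) {w : X} (hw : w ∈ S u) : η u ≤ η w :=
  EReal.sub_nonpos.1 <| ge_of_tendsto' hgap fun n =>
    EReal.sub_le_sub (hη _ u (hu (n + 1))) (sInf_le ⟨w, hS _ u (hu n) hw, rfl⟩)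

end LowerSets

theorem preorder_principle_general {X : Type*} (r : X → X → Prop)
    (htrans : ∀ {a b c : X}, r a b → r b c → r a c)
    (S : X → Set X) (hS : ∀ x, S x = {x' | r x' x})
    (x₀ : X)
    (η : X → EReal) (hmono : ∀ x₁ x₂, r x₁ x₂ → η x₁ ≤ η x₂)
    (hA : ⊥ < sInf (η '' S x₀) ∧ sInf (η '' S x₀) < ⊤)
    (hB : ∀ x ∈ S x₀, ⊥ < η x → η x < ⊤ →
      ∀ x' ∈ S x, x' ≠ x → η x' < η x)
    (hC : ∀ xs : ℕ → X, (∀ n, xs n ∈ S x₀) → (∀ n, xs (n + 1) ∈ S (xs n)) →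
      Tendsto (fun n => η (xs (n + 1)) - sInf (η '' S (xs n))) atTop (nhds 0) →
      ∃ u : X, ∀ n, u ∈ S (xs n)) :
    ∃ xhat : X, xhat ∈ S x₀ ∧ S xhat ⊆ {xhat} := by
  have hS_trans : ∀ x, ∀ y ∈ S x, S y ⊆ S x := by
    intro x y hy z hz
    rw [hS] at hy hz ⊢
    exact htrans hz hy
  have hη : ∀ x, ∀ y ∈ S x, η y ≤ η x := fun x y hy => hmono y x (by rwa [hS] at hy)
  by_contra! hnot
  obtain ⟨xs, hxs, hstep, hgap⟩ := exists_seq_tendsto_sub_sInf hS_trans hη hA.1 hA.2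
    fun x hx => (Set.nonempty_of_not_subset (hnot x hx)).mono Set.sdiff_subset
  obtain ⟨u, hu⟩ := hC xs (fun n => (hxs n).1) hstep hgap
  have hu₀ : u ∈ S x₀ := hS_trans x₀ _ (hxs 0).1 (hu 0)
  obtain ⟨w, hw, hwu⟩ := Set.not_subset.1 (hnot u hu₀)
  have hlt : η w < η u := hB u hu₀ (hA.1.trans_le (sInf_le (Set.mem_image_of_mem η hu₀)))
    ((hη _ u (hu 0)).trans_lt (hxs 0).2) w hw hwu
  exact (le_of_tendsto_sub_sInf hS_trans hη hgap hu hw).not_gt hlt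

/-- **Pre-order principle (Theorem 2.1).** -/
theorem preorder_principle {X : Type*} (r : X → X → Prop)
    (htrans : ∀ {a b c : X}, r a b → r b c → r a c)
    (S : X → Set X) (hS : ∀ x, S x = {x' | r x' x})
    (x₀ : X) (hS0 : (S x₀).Nonempty)
    (η : X → EReal) (hmono : ∀ x₁ x₂, r x₁ x₂ → η x₁ ≤ η x₂)
    (hA : ⊥ < sInf (η '' S x₀) ∧ sInf (η '' S x₀) < ⊤)
    (hB : ∀ x ∈ S x₀, ⊥ < η x → η x < ⊤ →
      ∀ x' ∈ S x, x' ≠ x → η x' < η x)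
    (hC : ∀ xs : ℕ → X, (∀ n, xs n ∈ S x₀) → (∀ n, xs (n + 1) ∈ S (xs n)) →
      Tendsto (fun n => η (xs (n + 1)) - sInf (η '' S (xs n))) atTop (nhds 0) →
      ∃ u : X, ∀ n, u ∈ S (xs n)) :
    ∃ xhat : X, xhat ∈ S x₀ ∧ S xhat ⊆ {xhat} :=
  preorder_principle_general r htrans S hS x₀ η hmono hA hB hC
end

section
/- Let X be a nonempty set, Y a real linear space, D ⊆ Y a convex cone, f : X → nonempty subsets of Y a set-valued map, and F_λ : X × X → nonempty subsets of D (λ ∈ Λ) a family satisfying the triangle inequality property: for all x₁, x₂, x₃ ∈ X and λ ∈ Λ there exist μ, ν ∈ Λ with F_μ(x₁,x₂) + F_ν(x₂,x₃) ⊆ F_λ(x₁,x₃) + D. Define x₂ ⪯ x₁ iff f(x₁) ⊆ f(x₂) + F_λ(x₂,x₁) + D for all λ ∈ Λ. Then ⪯ is transitive. -/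
open Pointwise

theorem Set.add_add_subset_add_of_add_subset {Y : Type*} [AddSemigroup Y] {D : Set Y}
    (hD : D + D ⊆ D) (A : Set Y) : A + D + D ⊆ A + D := by
  rw [add_assoc]
  exact Set.add_subset_add_left hD

theorem setvalued_preorder_transitive_general {X Y Λ : Type*}
    [AddCommGroup Y]
    (D : Set Y) (hDadd : D + D ⊆ D)
    (f : X → Set Y)
    (F : Λ → X → X → Set Y)
    (hTI : ∀ x₁ x₂ x₃ : X, ∀ l : Λ, ∃ μ ν : Λ,
      F μ x₁ x₂ + F ν x₂ x₃ ⊆ F l x₁ x₃ + D) :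
    Transitive (fun x₂ x₁ => ∀ l : Λ, f x₁ ⊆ f x₂ + F l x₂ x₁ + D) := by
  intro a b c hab hbc l
  obtain ⟨μ, ν, hμν⟩ := hTI a b c l
  calc f c ⊆ f b + F ν b c + D := hbc ν
    _ ⊆ f a + F μ a b + D + F ν b c + D := by gcongr; exact hab μ
    _ = f a + (F μ a b + F ν b c) + D + D := by abel
    _ ⊆ f a + (F l a c + D) + D + D := by gcongr
    _ = f a + F l a c + D + D + D := by abel
    _ ⊆ f a + F l a c + D :=
      (Set.add_add_subset_add_of_add_subset hDadd _).trans
        (Set.add_add_subset_add_of_add_subset hDadd _)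

/-- **Lemma 3.1.** The relation `x₂ ⪯ x₁ ↔ ∀ λ, f x₁ ⊆ f x₂ + F λ x₂ x₁ + D` is transitive. -/
theorem setvalued_preorder_transitive {X Y Λ : Type*} [Nonempty X]
    [AddCommGroup Y] [Module ℝ Y]
    (D : Set Y) (hDadd : D + D ⊆ D) (hDsmul : ∀ α : ℝ, 0 ≤ α → α • D ⊆ D)
    (f : X → Set Y) (hf : ∀ x, (f x).Nonempty)
    (F : Λ → X → X → Set Y)
    (hFD : ∀ l x x', F l x x' ⊆ D) (hFne : ∀ l x x', (F l x x').Nonempty)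
    (hTI : ∀ x₁ x₂ x₃ : X, ∀ l : Λ, ∃ μ ν : Λ,
      F μ x₁ x₂ + F ν x₂ x₃ ⊆ F l x₁ x₃ + D) :
    Transitive (fun x₂ x₁ => ∀ l : Λ, f x₁ ⊆ f x₂ + F l x₂ x₁ + D) :=
  setvalued_preorder_transitive_general D hDadd f F hTI
end

section
/- Let X be a nonempty set, Y a real linear space, D ⊆ Y a convex cone, f : X → nonempty subsets of Y, and F_λ : X × X → nonempty subsets of D (λ ∈ Λ) a family satisfying the triangle inequality property. Let x₀ ∈ X with S(x₀) := {x ∈ X : f(x₀) ⊆ f(x) + F_λ(x, x₀) + D for all λ} nonempty. Suppose there exists a D-monotone extended real function ξ : Y → ℝ ∪ {±∞} such that: (D) −∞ < inf ξ(f(S(x₀))) < +∞; (E) for any x ∈ S(x₀) with −∞ < inf ξ(f(x)) < +∞ and any x′ ∈ S(x) \ {x}, inf ξ(f(x)) > inf ξ(f(x′)); (F) for any sequence (xₙ) ⊆ S(x₀) with xₙ ∈ S(xₙ₋₁) and inf ξ(f(xₙ)) − inf ξ(f(S(xₙ₋₁))) → 0, there exists u ∈ X with u ∈ S(xₙ)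 for all n. Then there exists x̂ ∈ X such that (a) f(x₀) ⊆ f(x̂) + F_λ(x̂, x₀) + D for all λ, and (b) for every x ≠ x̂ there exists λ with f(x̂) ⊄ f(x) + F_λ(x, x̂) + D. -/
/-! Write `v x = inf ξ(f x)`. The triangle inequality property makes `S` transitive
(`x' ∈ S x → S x' ⊆ S x`), and (E) makes `v` nonincreasing along `S` at points of
finite value. If no point of `S x₀` were terminal (`S x ⊆ {x}`), we could choose
`xₙ₊₁ ∈ S xₙ` with `v xₙ₊₁ < inf v(S xₙ) + 1/(n+1)`, and (F) would give a `u` in every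
`S xₙ`. For `x ∈ S u`, `x ≠ u`, transitivity gives `v u - v x ≤ v xₙ₊₁ - inf v(S xₙ) → 0`,
against `v x < v u` from (E); so `u` is terminal after all. -/

open Pointwise Filter Topology

theorem Set.subset_add_add_of_subset_add_add {Y : Type*} [AddCommMonoid Y] {D : Set Y}
    (hD : D + D ⊆ D) {A B C P Q R : Set Y} (hAB : A ⊆ B + P + D) (hBC : B ⊆ C + Q + D)
    (hQP : Q + P ⊆ R + D) : A ⊆ C + R + D :=
  calc A ⊆ C + Q + D + P + D := hAB.trans (by gcongr)
    _ = C + (Q + P) + (D + D) := by abel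
    _ ⊆ C + (R + D) + D := by gcongr
    _ = C + R + (D + D) := by abel
    _ ⊆ C + R + D := by gcongr

theorem sInf_image_biUnion {α β γ : Type*} [CompleteLattice γ] (g : β → γ) (s : Set α)
    (t : α → Set β) : sInf (g '' ⋃ i ∈ s, t i) = ⨅ i ∈ s, sInf (g '' t i) := by
  simp only [sInf_image, iInf_iUnion]

theorem exists_seq_mem_of_forall_exists_mem {α : Type*} {T : Set α}
    {R : ℕ → α → α → Prop} {a : α} (ha : a ∈ T) (h : ∀ n, ∀ x ∈ T, ∃ y ∈ T, R n x y) :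
    ∃ xs : ℕ → α, (∀ n, xs n ∈ T) ∧ ∀ n, R n (xs n) (xs (n + 1)) := by
  choose g hgT hgR using h
  let ys : ℕ → T := fun n => Nat.rec ⟨a, ha⟩ (fun n x => ⟨g n x x.2, hgT n x x.2⟩) n
  exact ⟨fun n => (ys n).1, fun n => (ys n).2, fun n => hgR n _ (ys n).2⟩

theorem EReal.tendsto_sub_nhds_zero_of_le_of_lt_add {a b : ℕ → EReal} {ε : ℕ → ℝ}
    (hε : Tendsto ε atTop (𝓝 0)) (ha : ∀ n, a n < ⊤) (hb : ∀ n, ⊥ < b n)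
    (hba : ∀ n, b n ≤ a n) (hab : ∀ n, a n < b n + ε n) :
    Tendsto (fun n => a n - b n) atTop (𝓝 0) := by
  have hε' : Tendsto (fun n => (ε n : EReal)) atTop (𝓝 0) := by
    simpa using EReal.tendsto_coe.2 hε
  refine tendsto_of_tendsto_of_tendsto_of_le_of_le tendsto_const_nhds hε' (fun n => ?_)
    (fun n => (EReal.sub_lt_of_lt_add' (hab n)).le)
  exact (EReal.sub_nonneg (.inl (ha n).ne) (.inr (hb n).ne')).2 (hba n)

section Chain

variable {X : Type*} {S : X → Set X} {v : X → EReal} {x₀ : X}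

theorem le_of_mem_of_lt_top (hbot : ⊥ < ⨅ z ∈ S x₀, v z)
    (hE : ∀ x ∈ S x₀, ⊥ < v x → v x < ⊤ → ∀ x' ∈ S x, x' ≠ x → v x' < v x)
    {x y : X} (hx : x ∈ S x₀) (hxtop : v x < ⊤) (hy : y ∈ S x) : v y ≤ v x := by
  rcases eq_or_ne y x with rfl | hne
  · rfl
  · exact (hE x hx (hbot.trans_le (biInf_le v hx)) hxtop y hy hne).le

theorem exists_mem_lt_biInf_add (htrans : ∀ x x', x' ∈ S x → S x' ⊆ S x)
    (hbot : ⊥ < ⨅ z ∈ S x₀, v z)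
    (hE : ∀ x ∈ S x₀, ⊥ < v x → v x < ⊤ → ∀ x' ∈ S x, x' ≠ x → v x' < v x)
    {x : X} (hx : x ∈ S x₀) (hxtop : v x < ⊤) (hSx : (S x).Nonempty) {ε : ℝ}
    (hε : 0 < ε) :
    ∃ y ∈ S x, v y < ⊤ ∧ v y < (⨅ z ∈ S x, v z) + ε := by
  obtain ⟨y, hy⟩ := hSx
  have htop : ⨅ z ∈ S x, v z < ⊤ :=
    (biInf_le v hy).trans_lt ((le_of_mem_of_lt_top hbot hE hx hxtop hy).trans_lt hxtop)
  have hbot' : ⊥ < ⨅ z ∈ S x, v z := hbot.trans_le (biInf_mono (htrans x₀ x hx))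
  obtain ⟨r, hr⟩ : ∃ r : ℝ, ⨅ z ∈ S x, v z = r :=
    ⟨_, (EReal.coe_toReal htop.ne hbot'.ne').symm⟩
  have hlt : ⨅ z ∈ S x, v z < (r + ε : ℝ) := by
    rw [hr]; exact_mod_cast lt_add_of_pos_right r hε
  simp only [iInf_lt_iff, exists_prop] at hlt
  obtain ⟨y', hy', hy'lt⟩ := hlt
  exact ⟨y', hy', hy'lt.trans (EReal.coe_lt_top _), by rwa [hr, ← EReal.coe_add]⟩

theorem exists_chain_of_forall_nonempty (htrans : ∀ x x', x' ∈ S x → S x' ⊆ S x)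
    (hbot : ⊥ < ⨅ z ∈ S x₀, v z) (htop : ⨅ z ∈ S x₀, v z < ⊤)
    (hE : ∀ x ∈ S x₀, ⊥ < v x → v x < ⊤ → ∀ x' ∈ S x, x' ≠ x → v x' < v x)
    (hne : ∀ x ∈ S x₀, (S x).Nonempty) {ε : ℕ → ℝ} (hε : ∀ n, 0 < ε n) :
    ∃ xs : ℕ → X, (∀ n, xs n ∈ S x₀ ∧ v (xs n) < ⊤) ∧
      ∀ n, xs (n + 1) ∈ S (xs n) ∧ v (xs (n + 1)) < (⨅ z ∈ S (xs n), v z) + ε n := by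
  obtain ⟨x₁, hx₁, hx₁top⟩ : ∃ x ∈ S x₀, v x < ⊤ := by
    simpa only [iInf_lt_iff, exists_prop] using htop
  refine exists_seq_mem_of_forall_exists_mem (T := {x | x ∈ S x₀ ∧ v x < ⊤})
    (R := fun n x y => y ∈ S x ∧ v y < (⨅ z ∈ S x, v z) + ε n) ⟨hx₁, hx₁top⟩ ?_
  rintro n x ⟨hx, hxtop⟩
  obtain ⟨y, hy, hytop, hylt⟩ :=
    exists_mem_lt_biInf_add htrans hbot hE hx hxtop (hne x hx) (hε n)
  exact ⟨y, ⟨htrans x₀ x hx hy, hytop⟩, hy, hylt⟩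

theorem subset_singleton_of_forall_mem (htrans : ∀ x x', x' ∈ S x → S x' ⊆ S x)
    (hbot : ⊥ < ⨅ z ∈ S x₀, v z)
    (hE : ∀ x ∈ S x₀, ⊥ < v x → v x < ⊤ → ∀ x' ∈ S x, x' ≠ x → v x' < v x)
    {xs : ℕ → X} (hxs : ∀ n, xs n ∈ S x₀ ∧ v (xs n) < ⊤)
    (hgap : Tendsto (fun n => v (xs (n + 1)) - ⨅ z ∈ S (xs n), v z) atTop (𝓝 0))
    {u : X} (hu : ∀ n, u ∈ S (xs n)) : S u ⊆ {u} := by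
  intro x hx
  by_contra hxu
  have hu₀ : u ∈ S x₀ := htrans x₀ (xs 0) (hxs 0).1 (hu 0)
  have hvu : ∀ n, v u ≤ v (xs n) := fun n =>
    le_of_mem_of_lt_top hbot hE (hxs n).1 (hxs n).2 (hu n)
  have hvx : v x < v u :=
    hE u hu₀ (hbot.trans_le (biInf_le v hu₀)) ((hvu 0).trans_lt (hxs 0).2) x hx hxu
  have hsub : v u - v x ≤ 0 := ge_of_tendsto' hgap fun n =>
    EReal.sub_le_sub (hvu (n + 1)) (biInf_le v (htrans (xs n) u (hu n) hx))
  exact hvx.not_ge (EReal.sub_nonpos.1 hsub)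

theorem exists_mem_subset_singleton (htrans : ∀ x x', x' ∈ S x → S x' ⊆ S x)
    (hbot : ⊥ < ⨅ z ∈ S x₀, v z) (htop : ⨅ z ∈ S x₀, v z < ⊤)
    (hE : ∀ x ∈ S x₀, ⊥ < v x → v x < ⊤ → ∀ x' ∈ S x, x' ≠ x → v x' < v x)
    (hF : ∀ xs : ℕ → X, (∀ n, xs n ∈ S x₀) → (∀ n, xs (n + 1) ∈ S (xs n)) →
      Tendsto (fun n => v (xs (n + 1)) - ⨅ z ∈ S (xs n), v z) atTop (𝓝 0) →
      ∃ u : X, ∀ n, u ∈ S (xs n)) :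
    ∃ xhat ∈ S x₀, S xhat ⊆ {xhat} := by
  by_contra! h
  have hne : ∀ x ∈ S x₀, (S x).Nonempty := fun x hx =>
    Set.nonempty_iff_ne_empty.2 fun hx' => h x hx (hx' ▸ Set.empty_subset _)
  obtain ⟨xs, hxs, hchain⟩ := exists_chain_of_forall_nonempty htrans hbot htop hE hne
    (ε := fun n => 1 / (n + 1)) fun n => Nat.one_div_pos_of_nat
  have hgap := EReal.tendsto_sub_nhds_zero_of_le_of_lt_add tendsto_one_div_add_atTop_nhds_zero_nat
    (fun n => (hxs (n + 1)).2)
    (fun n => hbot.trans_le (biInf_mono (htrans x₀ (xs n) (hxs n).1)))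
    (fun n => biInf_le v (hchain n).1) (fun n => (hchain n).2)
  obtain ⟨u, hu⟩ := hF xs (fun n => (hxs n).1) (fun n => (hchain n).1) hgap
  exact h u (htrans x₀ (xs 0) (hxs 0).1 (hu 0))
    (subset_singleton_of_forall_mem htrans hbot hE hxs hgap hu)

end Chain

theorem general_setvalued_EVP_general {X Y Λ : Type*}
    [AddCommGroup Y]
    (D : Set Y) (hDadd : D + D ⊆ D)
    (f : X → Set Y)
    (F : Λ → X → X → Set Y)
    (hTI : ∀ x₁ x₂ x₃ : X, ∀ l : Λ, ∃ μ ν : Λ,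
      F μ x₁ x₂ + F ν x₂ x₃ ⊆ F l x₁ x₃ + D)
    (S : X → Set X)
    (hS : ∀ x, S x = {x' | ∀ l : Λ, f x ⊆ f x' + F l x' x + D})
    (x₀ : X)
    (ξ : Y → EReal)
    (hD : ⊥ < sInf (ξ '' (⋃ x ∈ S x₀, f x)) ∧ sInf (ξ '' (⋃ x ∈ S x₀, f x)) < ⊤)
    (hE : ∀ x ∈ S x₀, ⊥ < sInf (ξ '' f x) → sInf (ξ '' f x) < ⊤ →
      ∀ x' ∈ S x, x' ≠ x → sInf (ξ '' f x') < sInf (ξ '' f x))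
    (hF : ∀ xs : ℕ → X, (∀ n, xs n ∈ S x₀) → (∀ n, xs (n + 1) ∈ S (xs n)) →
      Tendsto (fun n => sInf (ξ '' f (xs (n + 1))) - sInf (ξ '' (⋃ x ∈ S (xs n), f x)))
        atTop (nhds 0) →
      ∃ u : X, ∀ n, u ∈ S (xs n)) :
    ∃ xhat : X,
      (∀ l : Λ, f x₀ ⊆ f xhat + F l xhat x₀ + D) ∧
      (∀ x : X, x ≠ xhat → ∃ l : Λ, ¬ f xhat ⊆ f x + F l x xhat + D) := by
  have htrans : ∀ x x', x' ∈ S x → S x' ⊆ S x := by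
    intro x x' hx' z hz
    rw [hS] at hx' hz ⊢
    intro l
    obtain ⟨μ, ν, hμν⟩ := hTI z x' x l
    exact Set.subset_add_add_of_subset_add_add hDadd (hx' ν) (hz μ) hμν
  simp only [sInf_image_biUnion] at hD hF
  obtain ⟨xhat, hxhat₀, hxhat⟩ :=
    exists_mem_subset_singleton (v := fun x => sInf (ξ '' f x)) htrans hD.1 hD.2 hE hF
  refine ⟨xhat, by rwa [hS] at hxhat₀, fun x hx => ?_⟩
  by_contra! h
  exact hx (hxhat (by rw [hS]; exact h))

/-- **Theorem 3.1.** A general set-valued Ekeland variational principle. -/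
theorem general_setvalued_EVP {X Y Λ : Type*} [Nonempty X]
    [AddCommGroup Y] [Module ℝ Y]
    (D : Set Y) (hDadd : D + D ⊆ D) (hDsmul : ∀ α : ℝ, 0 ≤ α → α • D ⊆ D)
    (f : X → Set Y) (hf : ∀ x, (f x).Nonempty)
    (F : Λ → X → X → Set Y)
    (hFD : ∀ l x x', F l x x' ⊆ D) (hFne : ∀ l x x', (F l x x').Nonempty)
    (hTI : ∀ x₁ x₂ x₃ : X, ∀ l : Λ, ∃ μ ν : Λ,
      F μ x₁ x₂ + F ν x₂ x₃ ⊆ F l x₁ x₃ + D)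
    (S : X → Set X)
    (hS : ∀ x, S x = {x' | ∀ l : Λ, f x ⊆ f x' + F l x' x + D})
    (x₀ : X) (hS0 : (S x₀).Nonempty)
    (ξ : Y → EReal) (hmono : ∀ y₁ y₂ : Y, y₁ - y₂ ∈ -D → ξ y₁ ≤ ξ y₂)
    (hD : ⊥ < sInf (ξ '' (⋃ x ∈ S x₀, f x)) ∧ sInf (ξ '' (⋃ x ∈ S x₀, f x)) < ⊤)
    (hE : ∀ x ∈ S x₀, ⊥ < sInf (ξ '' f x) → sInf (ξ '' f x) < ⊤ →
      ∀ x' ∈ S x, x' ≠ x → sInf (ξ '' f x') < sInf (ξ '' f x))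
    (hF : ∀ xs : ℕ → X, (∀ n, xs n ∈ S x₀) → (∀ n, xs (n + 1) ∈ S (xs n)) →
      Tendsto (fun n => sInf (ξ '' f (xs (n + 1))) - sInf (ξ '' (⋃ x ∈ S (xs n), f x)))
        atTop (nhds 0) →
      ∃ u : X, ∀ n, u ∈ S (xs n)) :
    ∃ xhat : X,
      (∀ l : Λ, f x₀ ⊆ f xhat + F l xhat x₀ + D) ∧
      (∀ x : X, x ≠ xhat → ∃ l : Λ, ¬ f xhat ⊆ f x + F l x xhat + D) :=
  general_setvalued_EVP_general D hDadd f F hTI S hS x₀ ξ hD hE hF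
end

section
/- In the setting of the general set-valued EVP with ξ a nonzero linear functional in the algebraic positive polar cone D^{+#} (so ξ(d) ≥ 0 for all d ∈ D): if ξ is lower bounded on f(S(x₀)) and for any distinct x, x′ ∈ S(x₀) there exists λ₀ ∈ Λ with inf{ξ(q) : q ∈ F_{λ₀}(x′, x)} > 0, then condition (E) holds: for any x ∈ S(x₀) and x′ ∈ S(x) \ {x}, inf ξ(f(x)) > inf ξ(f(x′)). -/
/-!
The relation `x' ∈ S x` is transitive, thanks to the triangle inequality for `F` and `D + D ⊆ D`;
hence `x ∈ S x₀` and `x' ∈ S x` give `x' ∈ S x₀`, and (E₁) supplies `λ₀` with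
`inf ξ(F_{λ₀}(x', x)) > 0`. Applying `ξ` to `f x ⊆ f x' + F_{λ₀}(x', x) + D`, with `ξ ≥ 0` on `D`,
yields `inf ξ(f x) ≥ inf ξ(f x') + inf ξ(F_{λ₀}(x', x)) > inf ξ(f x')`.
-/

open Pointwise Set

theorem Set.subset_add_add_trans {M : Type*} [AddCommMonoid M] {A B C P Q R D : Set M}
    (hD : D + D ⊆ D) (hA : A ⊆ B + P + D) (hB : B ⊆ C + Q + D) (hQP : Q + P ⊆ R + D) :
    A ⊆ C + R + D :=
  calc A ⊆ B + P + D := hA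
    _ ⊆ C + Q + D + P + D := by gcongr
    _ = C + (Q + P) + (D + D) := by abel
    _ ⊆ C + (R + D) + D := by gcongr
    _ = C + R + (D + D) := by abel
    _ ⊆ C + R + D := by gcongr

theorem csInf_image_add_csInf_image_le_of_subset_add_add {Y G : Type*} [AddCommMonoid Y]
    [FunLike G Y ℝ] [AddMonoidHomClass G Y ℝ] (ξ : G) {A B P D : Set Y} (hA : A.Nonempty)
    (hsub : A ⊆ B + P + D) (hξD : ∀ d ∈ D, 0 ≤ ξ d) (hB : BddBelow (ξ '' B))
    (hP : BddBelow (ξ '' P)) :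
    sInf (ξ '' B) + sInf (ξ '' P) ≤ sInf (ξ '' A) := by
  refine le_csInf (hA.image ξ) (forall_mem_image.2 fun y hy => ?_)
  obtain ⟨_, ⟨b, hb, p, hp, rfl⟩, d, hd, rfl⟩ := hsub hy
  have hb' := csInf_le hB (mem_image_of_mem ξ hb)
  have hp' := csInf_le hP (mem_image_of_mem ξ hp)
  have hd' := hξD d hd
  rw [map_add, map_add]
  linarith

theorem E1_implies_E_general {X Y Λ : Type*}
    [AddCommGroup Y] [Module ℝ Y]
    (D : Set Y) (hDadd : D + D ⊆ D)
    (f : X → Set Y) (hf : ∀ x, (f x).Nonempty)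
    (F : Λ → X → X → Set Y)
    (hFD : ∀ l x x', F l x x' ⊆ D)
    (hTI : ∀ x₁ x₂ x₃ : X, ∀ l : Λ, ∃ μ ν : Λ,
      F μ x₁ x₂ + F ν x₂ x₃ ⊆ F l x₁ x₃ + D)
    (S : X → Set X)
    (hS : ∀ x, S x = {x' | ∀ l : Λ, f x ⊆ f x' + F l x' x + D})
    (x₀ : X)
    (ξ : Y →ₗ[ℝ] ℝ) (hξD : ∀ d ∈ D, 0 ≤ ξ d)
    (hbd : ∃ c : ℝ, ∀ y ∈ ⋃ x ∈ S x₀, f x, c ≤ ξ y)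
    (hE1 : ∀ x ∈ S x₀, ∀ x' ∈ S x₀, x ≠ x' →
      ∃ l₀ : Λ, 0 < sInf (ξ '' F l₀ x' x)) :
    ∀ x ∈ S x₀, ∀ x' ∈ S x, x' ≠ x → sInf (ξ '' f x') < sInf (ξ '' f x) := by
  intro x hx x' hx' hne
  have hmem : ∀ {a b}, b ∈ S a ↔ ∀ l, f a ⊆ f b + F l b a + D := by simp [hS]
  have hx'₀ : x' ∈ S x₀ := hmem.2 fun l => by
    obtain ⟨μ, ν, hμν⟩ := hTI x' x x₀ l
    exact subset_add_add_trans hDadd (hmem.1 hx ν) (hmem.1 hx' μ) hμν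
  obtain ⟨c, hc⟩ := hbd
  obtain ⟨l₀, hl₀⟩ := hE1 x hx x' hx'₀ hne.symm
  have hfbdd : BddBelow (ξ '' f x') :=
    ⟨c, forall_mem_image.2 fun y hy => hc y (mem_biUnion hx'₀ hy)⟩
  have hFbdd : BddBelow (ξ '' F l₀ x' x) :=
    ⟨0, forall_mem_image.2 fun q hq => hξD q (hFD _ _ _ hq)⟩
  have := csInf_image_add_csInf_image_le_of_subset_add_add ξ (hf x) (hmem.1 hx' l₀) hξD
    hfbdd hFbdd
  linarith

/-- **Corollary 3.1** (key implication): assumption (E₁) implies assumption (E). -/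
theorem E1_implies_E {X Y Λ : Type*} [Nonempty X]
    [AddCommGroup Y] [Module ℝ Y]
    (D : Set Y) (hDadd : D + D ⊆ D) (hDsmul : ∀ α : ℝ, 0 ≤ α → α • D ⊆ D)
    (f : X → Set Y) (hf : ∀ x, (f x).Nonempty)
    (F : Λ → X → X → Set Y)
    (hFD : ∀ l x x', F l x x' ⊆ D) (hFne : ∀ l x x', (F l x x').Nonempty)
    (hTI : ∀ x₁ x₂ x₃ : X, ∀ l : Λ, ∃ μ ν : Λ,
      F μ x₁ x₂ + F ν x₂ x₃ ⊆ F l x₁ x₃ + D)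
    (S : X → Set X)
    (hS : ∀ x, S x = {x' | ∀ l : Λ, f x ⊆ f x' + F l x' x + D})
    (x₀ : X) (hS0 : (S x₀).Nonempty)
    (ξ : Y →ₗ[ℝ] ℝ) (hξ0 : ξ ≠ 0) (hξD : ∀ d ∈ D, 0 ≤ ξ d)
    (hbd : ∃ c : ℝ, ∀ y ∈ ⋃ x ∈ S x₀, f x, c ≤ ξ y)
    (hE1 : ∀ x ∈ S x₀, ∀ x' ∈ S x₀, x ≠ x' →
      ∃ l₀ : Λ, 0 < sInf (ξ '' F l₀ x' x)) :
    ∀ x ∈ S x₀, ∀ x' ∈ S x, x' ≠ x → sInf (ξ '' f x') < sInf (ξ '' f x) :=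
  E1_implies_E_general D hDadd f hf F hFD hTI S hS x₀ ξ hξD hbd hE1
end

section
/- Let (X,d) be a complete metric space, Y a real linear space, D ⊆ Y a convex cone, f : X → nonempty subsets of Y, and (F_λ)_{λ∈Λ} a family of set-valued maps X × X → nonempty subsets of D satisfying the triangle inequality property. Let x₀ ∈ X with S(x₀) nonempty. Suppose S(x) is dynamically closed for every x ∈ S(x₀), and there exists ξ ∈ D^{+#} \ {0} such that ξ is lower bounded on f(S(x₀)) and there exists λ₀ ∈ Λ such that for every δ > 0, inf{ξ(q) : q ∈ F_{λ₀}(x, x′), d(x,x′) ≥ δ} > 0. Then there exists x̂ ∈ X such that (a) f(x₀) ⊆ f(x̂) + F_λ(x̂, x₀) + D for all λ, and (b) for every x ≠ x̂ there exists λ with f(x̂) ⊄ f(x) + F_λ(x, x̂) + D. -/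
/-!
Put `φ x = inf ξ(f x)`. Moving a distance `δ` along the domination relation `S` lowers `φ` by a
fixed `c(δ) > 0` (this is where `λ₀` enters), so if `x` is an `ε`-minimizer of `φ` on a section
containing `S x`, with `ε < c(δ)`, then `S x` lies in the `δ`-ball around `x`. Choosing every point
of a sequence as a `1/(n+1)`-minimizer on the section of the previous one gives a Cauchy sequence
with nested sections; dynamic closedness puts its limit `x̂` in all of them, and then `S x̂` lies in
balls of arbitrarily small radius around `x̂`.
-/

open Pointwise Filter Topology

theorem exists_forall_le_add_of_bddBelow {α : Type*} {s : Set α} {φ : α → ℝ} (hs : s.Nonempty)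
    (hbdd : BddBelow (φ '' s)) {ε : ℝ} (hε : 0 < ε) : ∃ x ∈ s, ∀ y ∈ s, φ x ≤ φ y + ε := by
  obtain ⟨_, ⟨x, hx, rfl⟩, hlt⟩ := Real.lt_sInf_add_pos (hs.image φ) hε
  exact ⟨x, hx, fun y hy => by linarith [csInf_le hbdd ⟨y, hy, rfl⟩]⟩

theorem exists_seq_forall_le_add {α : Type*} {S : α → Set α} {φ : α → ℝ} {x₀ : α}
    (htrans : ∀ x, ∀ y ∈ S x, S y ⊆ S x)
    (hx₀ : (S x₀).Nonempty) (hne : ∀ x ∈ S x₀, (S x).Nonempty) (hbdd : BddBelow (φ '' S x₀))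
    {ε : ℕ → ℝ} (hε : ∀ n, 0 < ε n) :
    ∃ xs : ℕ → α, xs 0 ∈ S x₀ ∧ (∀ n, xs (n + 1) ∈ S (xs n)) ∧
      ∀ n, ∀ y ∈ S (xs (n + 1)), φ (xs (n + 1)) ≤ φ y + ε n := by
  have hstep : ∀ n, ∀ x : S x₀, ∃ x' : S x₀, x'.1 ∈ S x ∧ ∀ y ∈ S x, φ x' ≤ φ y + ε n := by
    rintro n ⟨x, hx⟩
    obtain ⟨x', hx', hmin⟩ := exists_forall_le_add_of_bddBelow (hne x hx)
      (hbdd.mono (Set.image_mono (htrans x₀ x hx))) (hε n)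
    exact ⟨⟨x', htrans x₀ x hx hx'⟩, hx', hmin⟩
  choose next hnext_mem hnext_le using hstep
  let xs : ℕ → S x₀ := fun n => Nat.rec ⟨hx₀.some, hx₀.some_mem⟩ next n
  refine ⟨fun n => (xs n).1, (xs 0).2, fun n => hnext_mem n (xs n), fun n y hy => ?_⟩
  exact hnext_le n (xs n) y (htrans _ _ (hnext_mem n (xs n)) hy)

section OrderingPrinciple

variable {X : Type*} [MetricSpace X]

def DynamicallyClosedAt (S : X → Set X) (x : X) : Prop :=
  ∀ xs : ℕ → X, (∀ n, xs n ∈ S x) → (∀ n, S (xs (n + 1)) ⊆ S (xs n)) → (∀ n, S (xs n) ⊆ S x) →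
    ∀ xbar : X, Tendsto xs atTop (𝓝 xbar) → xbar ∈ S x

theorem dist_lt_of_forall_le_add {φ : X → ℝ} {s : Set X} {x : X} {δ c ε : ℝ}
    (hdecr : ∀ y ∈ s, δ ≤ dist y x → φ y + c ≤ φ x) (hnear : ∀ y ∈ s, φ x ≤ φ y + ε)
    (hε : ε < c) : ∀ y ∈ s, dist y x < δ := fun y hy => by
  by_contra! h
  linarith [hdecr y hy h, hnear y hy]

variable {S : X → Set X} {φ : X → ℝ} {x₀ : X}

theorem exists_mem_forall_mem_eq_of_dynamicallyClosedAt [CompleteSpace X]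
    (htrans : ∀ x, ∀ y ∈ S x, S y ⊆ S x) (hx₀ : (S x₀).Nonempty) (hbdd : BddBelow (φ '' S x₀))
    (hdecr : ∀ δ > 0, ∃ c > 0, ∀ x ∈ S x₀, ∀ y ∈ S x, δ ≤ dist y x → φ y + c ≤ φ x)
    (hdyn : ∀ x ∈ S x₀, DynamicallyClosedAt S x) :
    ∃ xhat ∈ S x₀, ∀ y ∈ S xhat, y = xhat := by
  by_cases hne : ∀ x ∈ S x₀, (S x).Nonempty
  swap
  · push Not at hne
    obtain ⟨x, hx, hempty⟩ := hne
    exact ⟨x, hx, by simp [hempty]⟩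
  obtain ⟨xs, hxs0, hstep, hnear⟩ := exists_seq_forall_le_add htrans hx₀ hne hbdd
    (ε := fun n => 1 / (n + 1)) fun n => Nat.one_div_pos_of_nat
  have hmem : ∀ n, xs n ∈ S x₀ := fun n => by
    induction n with
    | zero => exact hxs0
    | succ n ih => exact htrans x₀ _ ih (hstep n)
  have hanti : Antitone (S ∘ xs) := antitone_nat_of_succ_le fun n => htrans _ _ (hstep n)
  have hlater : ∀ n m, n < m → xs m ∈ S (xs n) := fun n m hnm => by
    obtain ⟨m, rfl⟩ := Nat.exists_eq_add_one_of_ne_zero (Nat.ne_zero_of_lt hnm)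
    exact hanti (Nat.le_of_lt_succ hnm) (hstep m)
  have hsmall : ∀ δ > 0, ∃ N, ∀ y ∈ S (xs (N + 1)), dist y (xs (N + 1)) < δ := by
    intro δ hδ
    obtain ⟨c, hc, hcdecr⟩ := hdecr δ hδ
    obtain ⟨N, hN⟩ := exists_nat_one_div_lt hc
    exact ⟨N, dist_lt_of_forall_le_add (hcdecr _ (hmem (N + 1))) (hnear N) hN⟩
  have hcauchy : CauchySeq xs := by
    refine Metric.cauchySeq_iff'.2 fun δ hδ => ?_
    obtain ⟨N, hN⟩ := hsmall δ hδ
    refine ⟨N + 1, fun m hm => ?_⟩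
    rcases hm.eq_or_lt with rfl | hlt
    · simpa using hδ
    · exact hN _ (hlater _ _ hlt)
  obtain ⟨xhat, hlim⟩ := cauchySeq_tendsto_of_complete hcauchy
  have hxhat : ∀ n, xhat ∈ S (xs n) := fun n =>
    hdyn (xs n) (hmem n) (fun k => xs (k + (n + 1))) (fun k => hlater _ _ (by omega))
      (fun k => hanti (by omega)) (fun k => hanti (by omega)) xhat
      (hlim.comp (tendsto_add_atTop_nat (n + 1)))
  refine ⟨xhat, htrans _ _ hxs0 (hxhat 0), fun y hy => eq_of_forall_dist_le fun δ hδ => ?_⟩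
  obtain ⟨N, hN⟩ := hsmall (δ / 2) (half_pos hδ)
  have hy' := hN y (htrans _ _ (hxhat (N + 1)) hy)
  have hxhat' := hN xhat (hxhat (N + 1))
  linarith [dist_triangle_right y xhat (xs (N + 1))]

end OrderingPrinciple

section SetValued

variable {X Y Λ : Type*} [AddCommMonoid Y]

def dominatingSet (f : X → Set Y) (F : Λ → X → X → Set Y) (D : Set Y) (x : X) : Set X :=
  {x' | ∀ l, f x ⊆ f x' + F l x' x + D}

theorem dominatingSet_subset {f : X → Set Y} {F : Λ → X → X → Set Y} {D : Set Y}
    (hDadd : D + D ⊆ D)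
    (hTI : ∀ x₁ x₂ x₃ : X, ∀ l : Λ, ∃ μ ν : Λ, F μ x₁ x₂ + F ν x₂ x₃ ⊆ F l x₁ x₃ + D)
    {x x' : X} (hx' : x' ∈ dominatingSet f F D x) :
    dominatingSet f F D x' ⊆ dominatingSet f F D x := by
  intro x'' hx'' l
  obtain ⟨μ, ν, hμν⟩ := hTI x'' x' x l
  calc f x ⊆ f x' + F ν x' x + D := hx' ν
    _ ⊆ f x'' + F μ x'' x' + D + F ν x' x + D := by gcongr; exact hx'' μ
    _ = f x'' + (F μ x'' x' + F ν x' x) + (D + D) := by abel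
    _ ⊆ f x'' + (F l x'' x + D) + D := by gcongr
    _ = f x'' + F l x'' x + (D + D) := by abel
    _ ⊆ f x'' + F l x'' x + D := by gcongr

end SetValued

theorem csInf_image_add_le_of_subset_add {Y G : Type*} [Add Y] [FunLike G Y ℝ]
    [AddHomClass G Y ℝ] (ξ : G) {A B C D : Set Y} {r : ℝ} (hA : A.Nonempty)
    (hB : BddBelow (ξ '' B)) (hC : ∀ q ∈ C, r ≤ ξ q) (hD : ∀ d ∈ D, 0 ≤ ξ d)
    (hsub : A ⊆ B + C + D) : sInf (ξ '' B) + r ≤ sInf (ξ '' A) := by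
  refine le_csInf (hA.image ξ) ?_
  rintro _ ⟨_, hy, rfl⟩
  obtain ⟨_, ⟨b, hb, q, hq, rfl⟩, d, hd, rfl⟩ := hsub hy
  rw [map_add, map_add]
  linarith [csInf_le hB ⟨b, hb, rfl⟩, hC q hq, hD d hd]

theorem setvalued_EVP_dynamically_closed_general {X Y Λ : Type*} [MetricSpace X] [CompleteSpace X]
    [AddCommGroup Y] [Module ℝ Y]
    (D : Set Y) (hDadd : D + D ⊆ D)
    (f : X → Set Y) (hf : ∀ x, (f x).Nonempty)
    (F : Λ → X → X → Set Y)
    (hTI : ∀ x₁ x₂ x₃ : X, ∀ l : Λ, ∃ μ ν : Λ,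
      F μ x₁ x₂ + F ν x₂ x₃ ⊆ F l x₁ x₃ + D)
    (S : X → Set X)
    (hS : ∀ x, S x = {x' | ∀ l : Λ, f x ⊆ f x' + F l x' x + D})
    (x₀ : X) (hS0 : (S x₀).Nonempty)
    (hdyn : ∀ x ∈ S x₀, ∀ xs : ℕ → X, (∀ n, xs n ∈ S x) →
      (∀ n, S (xs (n + 1)) ⊆ S (xs n)) → (∀ n, S (xs n) ⊆ S x) →
      ∀ xbar : X, Tendsto xs atTop (nhds xbar) → xbar ∈ S x)
    (ξ : Y →ₗ[ℝ] ℝ) (hξD : ∀ d ∈ D, 0 ≤ ξ d)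
    (hbd : ∃ c : ℝ, ∀ y ∈ ⋃ x ∈ S x₀, f x, c ≤ ξ y)
    (hE3 : ∃ l₀ : Λ, ∀ δ : ℝ, 0 < δ →
      ∃ c : ℝ, 0 < c ∧ ∀ x x' : X, δ ≤ dist x x' → ∀ q ∈ F l₀ x x', c ≤ ξ q) :
    ∃ xhat : X,
      (∀ l : Λ, f x₀ ⊆ f xhat + F l xhat x₀ + D) ∧
      (∀ x : X, x ≠ xhat → ∃ l : Λ, ¬ f xhat ⊆ f x + F l x xhat + D) := by
  obtain rfl : S = dominatingSet f F D := funext hS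
  obtain ⟨l₀, hl₀⟩ := hE3
  obtain ⟨c, hc⟩ := hbd
  have hbddξ : ∀ x ∈ dominatingSet f F D x₀, BddBelow (ξ '' f x) := fun x hx =>
    ⟨c, by rintro _ ⟨y, hy, rfl⟩; exact hc y (Set.mem_biUnion hx hy)⟩
  have hbddφ : BddBelow ((fun x => sInf (ξ '' f x)) '' dominatingSet f F D x₀) := ⟨c, by
    rintro _ ⟨x, hx, rfl⟩
    exact le_csInf ((hf x).image ξ) fun _ ⟨y, hy, hξy⟩ => hξy ▸ hc y (Set.mem_biUnion hx hy)⟩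
  have htrans : ∀ x, ∀ y ∈ dominatingSet f F D x, dominatingSet f F D y ⊆ dominatingSet f F D x :=
    fun _ _ => dominatingSet_subset hDadd hTI
  obtain ⟨xhat, hxhat, hmin⟩ := exists_mem_forall_mem_eq_of_dynamicallyClosedAt htrans hS0 hbddφ
    (fun δ hδ => by
      obtain ⟨c', hc', hc'F⟩ := hl₀ δ hδ
      exact ⟨c', hc', fun x hx y hy hδy => csInf_image_add_le_of_subset_add ξ (hf x)
        (hbddξ y (htrans _ _ hx hy)) (hc'F y x hδy) hξD (hy l₀)⟩)
    hdyn
  exact ⟨xhat, hxhat, fun x hx => not_forall.1 (mt (hmin x) hx)⟩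

/-- **Corollary 3.4.** Set-valued EVP on a complete metric space with dynamically
closed sections. -/
theorem setvalued_EVP_dynamically_closed {X Y Λ : Type*} [MetricSpace X] [CompleteSpace X]
    [AddCommGroup Y] [Module ℝ Y]
    (D : Set Y) (hDadd : D + D ⊆ D) (hDsmul : ∀ α : ℝ, 0 ≤ α → α • D ⊆ D)
    (f : X → Set Y) (hf : ∀ x, (f x).Nonempty)
    (F : Λ → X → X → Set Y)
    (hFD : ∀ l x x', F l x x' ⊆ D) (hFne : ∀ l x x', (F l x x').Nonempty)
    (hTI : ∀ x₁ x₂ x₃ : X, ∀ l : Λ, ∃ μ ν : Λ,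
      F μ x₁ x₂ + F ν x₂ x₃ ⊆ F l x₁ x₃ + D)
    (S : X → Set X)
    (hS : ∀ x, S x = {x' | ∀ l : Λ, f x ⊆ f x' + F l x' x + D})
    (x₀ : X) (hS0 : (S x₀).Nonempty)
    (hdyn : ∀ x ∈ S x₀, ∀ xs : ℕ → X, (∀ n, xs n ∈ S x) →
      (∀ n, S (xs (n + 1)) ⊆ S (xs n)) → (∀ n, S (xs n) ⊆ S x) →
      ∀ xbar : X, Tendsto xs atTop (nhds xbar) → xbar ∈ S x)
    (ξ : Y →ₗ[ℝ] ℝ) (hξ0 : ξ ≠ 0) (hξD : ∀ d ∈ D, 0 ≤ ξ d)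
    (hbd : ∃ c : ℝ, ∀ y ∈ ⋃ x ∈ S x₀, f x, c ≤ ξ y)
    (hE3 : ∃ l₀ : Λ, ∀ δ : ℝ, 0 < δ →
      ∃ c : ℝ, 0 < c ∧ ∀ x x' : X, δ ≤ dist x x' → ∀ q ∈ F l₀ x x', c ≤ ξ q) :
    ∃ xhat : X,
      (∀ l : Λ, f x₀ ⊆ f xhat + F l xhat x₀ + D) ∧
      (∀ x : X, x ≠ xhat → ∃ l : Λ, ¬ f xhat ⊆ f x + F l x xhat + D) :=
  setvalued_EVP_dynamically_closed_general D hDadd f hf F hTI S hS x₀ hS0 hdyn ξ hξD hbd hE3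
end

section
/- Let (X,d) be a complete metric space, Y a locally convex space, D ⊆ Y a closed convex cone, and k₀ ∈ D \ (−D). Let f : X → nonempty subsets of Y be D-sequentially lower monotone with D-closed values, and suppose f(X) is D-bounded. Suppose x₀ ∈ X and ε > 0 satisfy f(x₀) ⊄ f(x) + εk₀ + D for all x ∈ X. Then for any λ > 0 there exists x̂ ∈ X such that: (a) f(x₀) ⊆ f(x̂) + (ε/λ)d(x̂,x₀)k₀ + D; (b) for every x ≠ x̂, f(x̂) ⊄ f(x) + (ε/λ)d(x,x̂)k₀ + D; (c) d(x₀, x̂) ≤ λ. -/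
/-!
Separating `-k₀` from the closed convex cone `D` gives a continuous linear functional `η ≥ 0` on
`D` with `η k₀ > 0`. It scalarizes `f` by `φ x = inf η(f x)`, which is bounded below because
`f(X)` is `D`-bounded, and which drops by at least `(ε/λ) η(k₀) d(x', x)` whenever
`f x ⊆ f x' + (ε/λ) d(x', x) k₀ + D`. This relation is a preorder, and a Brézis–Browder descent
along it (each step almost minimising `φ` below the current point) yields a Cauchy sequence.
Sequential lower monotonicity and the closedness of `f x + D` put its limit `x̂` below every term,
and `x̂` is then minimal: this gives (a) and (b). If `d(x₀, x̂) > λ`, then (a) would give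
`f x₀ ⊆ f x̂ + ε k₀ + D`, contradicting the choice of `x₀` and `ε`; hence (c).
-/

open Pointwise Filter Topology

section Descent
variable {α X : Type*}

theorem rel_of_le_of_rel_succ {R : α → α → Prop} (hrefl : ∀ a, R a a)
    (htrans : ∀ a b c, R a b → R b c → R a c)
    {u : ℕ → α} (hu : ∀ n, R (u (n + 1)) (u n)) {m n : ℕ} (hnm : n ≤ m) : R (u m) (u n) := by
  induction m, hnm using Nat.le_induction with
  | base => exact hrefl _
  | succ m _ ih => exact htrans _ _ _ (hu m) ih

variable [MetricSpace X]

theorem cauchySeq_of_dist_le_mul_dist {u : ℕ → X} {v : ℕ → ℝ} {K : ℝ} (hv : CauchySeq v)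
    (huv : ∀ m n, dist (u m) (u n) ≤ K * dist (v m) (v n)) : CauchySeq u := by
  rw [cauchySeq_iff_tendsto_dist_atTop_0] at hv ⊢
  exact squeeze_zero (fun _ ↦ dist_nonneg) (fun p ↦ huv p.1 p.2) (by simpa using hv.const_mul K)

variable {R : X → X → Prop} {φ : X → ℝ} {κ : ℝ}

theorem cauchySeq_of_rel_succ (hrefl : ∀ x, R x x) (htrans : ∀ x y z, R x y → R y z → R x z)
    (hφ : BddBelow (Set.range φ)) (hκ : 0 < κ)
    (hdesc : ∀ x' x, R x' x → φ x' + κ * dist x' x ≤ φ x)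
    {u : ℕ → X} (hu : ∀ n, R (u (n + 1)) (u n)) : CauchySeq u := by
  have hdist : ∀ {m n}, n ≤ m → κ * dist (u m) (u n) ≤ φ (u n) - φ (u m) := fun hnm ↦ by
    linarith [hdesc _ _ (rel_of_le_of_rel_succ hrefl htrans hu hnm)]
  have hanti : Antitone (φ ∘ u) := antitone_nat_of_succ_le fun n ↦
    show φ (u (n + 1)) ≤ φ (u n) by
      linarith [hdist n.le_succ, mul_nonneg hκ.le (dist_nonneg (x := u (n + 1)) (y := u n))]
  have hφu : CauchySeq (φ ∘ u) :=
    (tendsto_atTop_ciInf hanti (hφ.mono (Set.range_comp_subset_range u φ))).cauchySeq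
  refine cauchySeq_of_dist_le_mul_dist hφu (K := κ⁻¹) fun m n ↦ ?_
  rw [le_inv_mul_iff₀ hκ, Real.dist_eq]
  rcases le_total n m with hnm | hmn
  · exact (hdist hnm).trans ((le_abs_self _).trans_eq (abs_sub_comm _ _))
  · rw [dist_comm]
    exact (hdist hmn).trans (le_abs_self _)

theorem exists_rel_minimal_of_descent [CompleteSpace X] (hrefl : ∀ x, R x x)
    (htrans : ∀ x y z, R x y → R y z → R x z) (hφ : BddBelow (Set.range φ)) (hκ : 0 < κ)
    (hdesc : ∀ x' x, R x' x → φ x' + κ * dist x' x ≤ φ x)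
    (hclosed : ∀ (u : ℕ → X) (x : X), (∀ n, R (u (n + 1)) (u n)) →
      Tendsto u atTop (𝓝 x) → ∀ n, R x (u n))
    (x₀ : X) : ∃ x, R x x₀ ∧ ∀ y, R y x → y = x := by
  have hnext : ∀ (x : X) (n : ℕ),
      ∃ x', R x' x ∧ φ x' < sInf (φ '' {z | R z x}) + 1 / (n + 1) := by
    intro x n
    obtain ⟨_, ⟨z, hz, rfl⟩, hlt⟩ :=
      Real.lt_sInf_add_pos (s := φ '' {z | R z x}) ⟨φ x, x, hrefl x, rfl⟩ n.one_div_pos_of_nat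
    exact ⟨z, hz, hlt⟩
  choose next hnext_rel hnext_lt using hnext
  let u : ℕ → X := fun n ↦ Nat.rec x₀ (fun k xk ↦ next xk k) n
  have hu : ∀ n, R (u (n + 1)) (u n) := fun n ↦ hnext_rel _ _
  obtain ⟨x, hux⟩ :=
    cauchySeq_tendsto_of_complete (cauchySeq_of_rel_succ hrefl htrans hφ hκ hdesc hu)
  have hxu := hclosed u x hu hux
  refine ⟨x, hxu 0, fun y hyx ↦ dist_le_zero.mp ?_⟩
  have hsmall : ∀ n : ℕ, κ * dist y x ≤ 1 / (n + 1) := fun n ↦ by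
    have hinf : sInf (φ '' {z | R z (u n)}) ≤ φ y :=
      csInf_le (hφ.mono (Set.image_subset_range _ _)) ⟨y, htrans _ _ _ hyx (hxu n), rfl⟩
    linarith [hnext_lt (u n) n, hdesc y x hyx, hdesc x (u (n + 1)) (hxu (n + 1)),
      mul_nonneg hκ.le (dist_nonneg (x := x) (y := u (n + 1)))]
  exact nonpos_of_mul_nonpos_right
    (ge_of_tendsto' tendsto_one_div_add_atTop_nhds_zero_nat hsmall) hκ

end Descent

theorem mem_add_singleton_add_iff {Y : Type*} [AddCommGroup Y] {A B : Set Y} {v y : Y} :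
    y ∈ A + {v} + B ↔ y - v ∈ A + B := by
  rw [add_right_comm, Set.add_singleton, Set.mem_image]
  exact ⟨fun ⟨z, hz, hzy⟩ ↦ by rwa [← hzy, add_sub_cancel_right],
    fun h ↦ ⟨y - v, h, sub_add_cancel y v⟩⟩

section SetValued
variable {X Y : Type*} [MetricSpace X] [AddCommGroup Y] [Module ℝ Y] (C : PointedCone ℝ Y) {k₀ : Y}

theorem PointedCone.add_coe_add_coe (A : Set Y) : A + C + C = A + C := by
  rw [add_assoc]
  exact congrArg (A + ·) C.toAddSubmonoid.coe_add_self_eq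

theorem PointedCone.add_mem_set_add {A : Set Y} {a d : Y} (ha : a ∈ A + C) (hd : d ∈ C) :
    a + d ∈ A + C :=
  C.add_coe_add_coe A ▸ Set.add_mem_add ha hd

theorem add_singleton_smul_add_subset (hk₀ : k₀ ∈ C) (A : Set Y) {s t : ℝ} (hst : s ≤ t) :
    A + {t • k₀} + C ⊆ A + {s • k₀} + C := fun y hy ↦ by
  rw [mem_add_singleton_add_iff] at hy ⊢
  have := C.add_mem_set_add hy (C.smul_mem (sub_nonneg.mpr hst) hk₀)
  rwa [sub_smul, sub_add_sub_cancel] at this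

def ekelandRel (k₀ : Y) (f : X → Set Y) (c : ℝ) (x' x : X) : Prop :=
  f x ⊆ f x' + {(c * dist x' x) • k₀} + C

variable {C} {f : X → Set Y} {c : ℝ}

theorem ekelandRel_refl (x : X) : ekelandRel C k₀ f c x x := fun y hy ↦ by
  rw [mem_add_singleton_add_iff, dist_self, mul_zero, zero_smul, sub_zero]
  exact ⟨y, hy, 0, C.zero_mem, add_zero y⟩

theorem ekelandRel_trans (hk₀ : k₀ ∈ C) (hc : 0 ≤ c) {x'' x' x : X}
    (h₁ : ekelandRel C k₀ f c x'' x') (h₂ : ekelandRel C k₀ f c x' x) :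
    ekelandRel C k₀ f c x'' x := by
  refine subset_trans (fun y hy ↦ ?_) (add_singleton_smul_add_subset C hk₀ _
    (mul_le_mul_of_nonneg_left (dist_triangle x'' x' x) hc))
  rw [mem_add_singleton_add_iff]
  obtain ⟨a, ha, d, hd, had⟩ := mem_add_singleton_add_iff.mp (h₂ hy)
  have := C.add_mem_set_add (mem_add_singleton_add_iff.mp (h₁ ha)) hd
  convert this using 1
  rw [mul_add, add_smul]
  linear_combination (norm := module) (-1 : ℝ) • (had : a + d = _)

theorem csInf_image_add_le_of_subset {η : Y →ₗ[ℝ] ℝ} (hη : ∀ y ∈ C, 0 ≤ η y) {A B : Set Y}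
    {v : Y} (hB : BddBelow (η '' B)) (hA : A.Nonempty) (h : A ⊆ B + {v} + C) :
    sInf (η '' B) + η v ≤ sInf (η '' A) := by
  refine le_csInf (hA.image η) ?_
  rintro _ ⟨y, hy, rfl⟩
  obtain ⟨b, hb, d, hd, hbd⟩ := mem_add_singleton_add_iff.mp (h hy)
  have hy : y = b + v + d := by
    rw [add_right_comm, show b + d = y - v from hbd, sub_add_cancel]
  rw [hy, map_add, map_add]
  linarith [csInf_le hB ⟨b, hb, rfl⟩, hη d hd]

end SetValued

section Topological
variable {X Y : Type*} [MetricSpace X] [AddCommGroup Y] [Module ℝ Y] [TopologicalSpace Y]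
  {C : PointedCone ℝ Y}

theorem PointedCone.exists_nonneg_pos_of_neg_notMem [IsTopologicalAddGroup Y] [ContinuousSMul ℝ Y]
    [LocallyConvexSpace ℝ Y] (hC : IsClosed (C : Set Y)) {k : Y} (hk : -k ∉ C) :
    ∃ η : StrongDual ℝ Y, (∀ y ∈ C, 0 ≤ η y) ∧ 0 < η k := by
  obtain ⟨η, hηC, hηk⟩ := ProperCone.hyperplane_separation_point ⟨C, hC⟩ hk
  exact ⟨η, hηC, by simpa using hηk⟩

theorem PointedCone.bddBelow_image_add [ContinuousSMul ℝ Y] {η : StrongDual ℝ Y}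
    (hη : ∀ y ∈ C, 0 ≤ η y) {M : Set Y} (hM : Bornology.IsVonNBounded ℝ M) :
    BddBelow (η '' (M + C)) := by
  obtain ⟨m, hm⟩ := ((NormedSpace.isVonNBounded_iff ℝ).mp (hM.image η)).bddBelow
  refine ⟨m, ?_⟩
  rintro _ ⟨_, ⟨a, ha, d, hd, rfl⟩, rfl⟩
  rw [map_add]
  linarith [hm ⟨a, ha, rfl⟩, hη d hd]

theorem ekelandRel_of_tendsto [IsTopologicalAddGroup Y] [ContinuousSMul ℝ Y] {k₀ : Y}
    {f : X → Set Y} {c : ℝ} (hk₀ : k₀ ∈ C) (hc : 0 ≤ c)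
    (hslm : ∀ (u : ℕ → X) (x : X), (∀ n, f (u n) ⊆ f (u (n + 1)) + (C : Set Y)) →
      Tendsto u atTop (𝓝 x) → ∀ n, f (u n) ⊆ f x + (C : Set Y))
    (hclv : ∀ x, IsClosed (f x + (C : Set Y))) {u : ℕ → X} {x : X}
    (hu : ∀ n, ekelandRel C k₀ f c (u (n + 1)) (u n)) (hux : Tendsto u atTop (𝓝 x)) (n : ℕ) :
    ekelandRel C k₀ f c x (u n) := fun y hy ↦ by
  have hchain : ∀ m, n ≤ m → ekelandRel C k₀ f c (u m) (u n) :=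
    fun m ↦ rel_of_le_of_rel_succ (fun _ ↦ ekelandRel_refl _)
      (fun _ _ _ ↦ ekelandRel_trans hk₀ hc) hu
  have hdrop : ∀ m, f (u m) ⊆ f (u (m + 1)) + (C : Set Y) := fun m ↦ by
    simpa using (hu m).trans (add_singleton_smul_add_subset C hk₀ _
      (mul_nonneg hc dist_nonneg : 0 ≤ c * dist (u (m + 1)) (u m)))
  have hux_le : ∀ m, f (u m) ⊆ f x + (C : Set Y) := hslm u x hdrop hux
  have hmem : ∀ᶠ m in atTop, y - (c * dist (u m) (u n)) • k₀ ∈ f x + (C : Set Y) :=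
    eventually_atTop.mpr ⟨n, fun m hnm ↦ by
      obtain ⟨a, ha, d, hd, had⟩ := mem_add_singleton_add_iff.mp (hchain m hnm hy)
      exact had ▸ C.add_mem_set_add (hux_le m ha) hd⟩
  have hlim : Tendsto (fun m ↦ y - (c * dist (u m) (u n)) • k₀) atTop
      (𝓝 (y - (c * dist x (u n)) • k₀)) :=
    tendsto_const_nhds.sub (((hux.dist tendsto_const_nhds).const_mul c).smul_const k₀)
  exact mem_add_singleton_add_iff.mpr ((hclv x).mem_of_tendsto hlim hmem)

end Topological

/-- **Corollary 3.5.** An improvement of Ha's set-valued Ekeland variational principle. -/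
theorem Ha_setvalued_EVP {X Y : Type*} [MetricSpace X] [CompleteSpace X]
    [AddCommGroup Y] [Module ℝ Y] [TopologicalSpace Y] [IsTopologicalAddGroup Y]
    [ContinuousSMul ℝ Y] [LocallyConvexSpace ℝ Y]
    (D : Set Y) (hDcl : IsClosed D) (hDadd : D + D ⊆ D)
    (hDsmul : ∀ α : ℝ, 0 ≤ α → α • D ⊆ D)
    (k₀ : Y) (hk₀ : k₀ ∈ D) (hk₀' : k₀ ∉ -D)
    (f : X → Set Y) (hf : ∀ x, (f x).Nonempty)
    (hslm : ∀ (xs : ℕ → X) (xbar : X), (∀ n, f (xs n) ⊆ f (xs (n + 1)) + D) →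
      Tendsto xs atTop (nhds xbar) → ∀ n, f (xs n) ⊆ f xbar + D)
    (hclv : ∀ x : X, IsClosed (f x + D))
    (hbd : ∃ M : Set Y, Bornology.IsVonNBounded ℝ M ∧ (⋃ x : X, f x) ⊆ M + D)
    (x₀ : X) (ε : ℝ) (hε : 0 < ε)
    (hx₀ : ∀ x : X, ¬ f x₀ ⊆ f x + {ε • k₀} + D) :
    ∀ lam : ℝ, 0 < lam → ∃ xhat : X,
      (f x₀ ⊆ f xhat + {((ε / lam) * dist xhat x₀) • k₀} + D) ∧
      (∀ x : X, x ≠ xhat → ¬ f xhat ⊆ f x + {((ε / lam) * dist x xhat) • k₀} + D) ∧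
      dist x₀ xhat ≤ lam := by
  intro lam hlam
  let C : PointedCone ℝ Y :=
    { carrier := D
      add_mem' := fun ha hb ↦ hDadd (Set.add_mem_add ha hb)
      zero_mem' := by simpa using hDsmul 0 le_rfl (Set.smul_mem_smul_set hk₀)
      smul_mem' := fun c _ hx ↦ hDsmul c c.2 (Set.smul_mem_smul_set hx) }
  obtain ⟨η, hηC, hηk₀⟩ := C.exists_nonneg_pos_of_neg_notMem hDcl hk₀'
  obtain ⟨M, hM, hfM⟩ := hbd
  obtain ⟨m, hm⟩ := C.bddBelow_image_add hηC hM
  have hηf : ∀ x, m ∈ lowerBounds (η '' f x) := fun x ↦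
    fun _ ⟨y, hy, hηy⟩ ↦ hm ⟨y, hfM (Set.mem_iUnion_of_mem x hy), hηy⟩
  have hc : 0 < ε / lam := div_pos hε hlam
  have hφ : BddBelow (Set.range fun x ↦ sInf (η '' f x)) :=
    ⟨m, Set.forall_mem_range.mpr fun x ↦ le_csInf ((hf x).image η) (hηf x)⟩
  have hdesc : ∀ x' x, ekelandRel C k₀ f (ε / lam) x' x →
      sInf (η '' f x') + ε / lam * η k₀ * dist x' x ≤ sInf (η '' f x) := fun x' x h ↦ by
    have := csInf_image_add_le_of_subset (η := (η : Y →ₗ[ℝ] ℝ)) hηC ⟨m, hηf x'⟩ (hf x) h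
    simp only [ContinuousLinearMap.coe_coe, map_smul, smul_eq_mul] at this
    linarith
  obtain ⟨xhat, hxhat, hmin⟩ := exists_rel_minimal_of_descent (fun _ ↦ ekelandRel_refl _)
    (fun _ _ _ ↦ ekelandRel_trans hk₀ hc.le) hφ (by positivity) hdesc
    (fun _ _ ↦ ekelandRel_of_tendsto hk₀ hc.le hslm hclv) x₀
  refine ⟨xhat, hxhat, fun x hx h ↦ hx (hmin x h), not_lt.mp fun hfar ↦ hx₀ xhat ?_⟩
  refine hxhat.trans (add_singleton_smul_add_subset C hk₀ _ ?_)
  rw [div_mul_eq_mul_div, le_div_iff₀ hlam, dist_comm]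
  exact mul_le_mul_of_nonneg_left hfar.le hε.le
end

section
/- Let Y be a real linear space, D ⊆ Y a convex cone, and k₀ ∈ D \ (−vcl(D)). Define the Gerstewitz function ξ_{k₀}(y) = inf{t ∈ ℝ : y ∈ tk₀ − D} (with inf ∅ = +∞). Then ξ_{k₀} is subadditive: ξ_{k₀}(y₁ + y₂) ≤ ξ_{k₀}(y₁) + ξ_{k₀}(y₂) for all y₁, y₂ ∈ Y. -/
open Pointwise Filter Topology

/-- The vector closure of a set `A` in a real linear space. -/
def vcl {Y : Type*} [AddCommGroup Y] [Module ℝ Y] (A : Set Y) : Set Y :=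
  {y | ∃ v : Y, ∃ lam : ℕ → ℝ, (∀ n, 0 ≤ lam n) ∧
    Tendsto lam atTop (nhds 0) ∧ ∀ n, y + lam n • v ∈ A}

/-- The Gerstewitz scalarization function `ξ_{k₀}(y) = inf {t : y ∈ t k₀ - D}`,
with values in `ℝ ∪ {±∞}` (here `sInf ∅ = +∞` in `EReal`). -/
noncomputable def gerstewitz {Y : Type*} [AddCommGroup Y] [Module ℝ Y]
    (D : Set Y) (k₀ : Y) (y : Y) : EReal :=
  sInf {t : EReal | ∃ r : ℝ, t = (r : EReal) ∧ r • k₀ - y ∈ D}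

/-!
If `r₁ k₀ - y₁` and `r₂ k₀ - y₂` lie in `D`, so does their sum `(r₁ + r₂) k₀ - (y₁ + y₂)`,
hence `ξ(y₁ + y₂) ≤ r₁ + r₂`; taking infima gives subadditivity. The only subtlety is the
extended-real sum `⊥ + ⊤`, excluded because `ξ` never takes the value `⊥`: were
`r k₀ - y ∈ D` for arbitrarily negative `r`, rescaling by `1 / |r|` would give
`-k₀ + |r|⁻¹ • (-y) ∈ D`, i.e. `-k₀ ∈ vcl D`.
-/

section

variable {Y : Type*} [AddCommGroup Y] [Module ℝ Y] {D : Set Y} {k₀ y : Y}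

lemma gerstewitz_le_of_smul_sub_mem {r : ℝ} (h : r • k₀ - y ∈ D) : gerstewitz D k₀ y ≤ r :=
  sInf_le ⟨r, rfl, h⟩

lemma exists_smul_sub_mem_of_gerstewitz_lt {c : ℝ} (h : gerstewitz D k₀ y < c) :
    ∃ r : ℝ, r < c ∧ r • k₀ - y ∈ D := by
  obtain ⟨_, ⟨r, rfl, hr⟩, hrc⟩ := sInf_lt_iff.mp h
  exact ⟨r, EReal.coe_lt_coe_iff.mp hrc, hr⟩

lemma neg_mem_vcl_of_tendsto_atBot (hDsmul : ∀ α : ℝ, 0 ≤ α → α • D ⊆ D) {r : ℕ → ℝ}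
    (hr : Tendsto r atTop atBot) (hneg : ∀ n, r n < 0) (hmem : ∀ n, r n • k₀ - y ∈ D) :
    -k₀ ∈ vcl D := by
  have hpos : ∀ n, 0 < (-r n)⁻¹ := fun n => inv_pos.2 (neg_pos.2 (hneg n))
  refine ⟨-y, fun n => (-r n)⁻¹, fun n => (hpos n).le,
    (tendsto_neg_atBot_atTop.comp hr).inv_tendsto_atTop, fun n => ?_⟩
  convert hDsmul _ (hpos n).le (Set.smul_mem_smul_set (hmem n)) using 1
  have : (-r n)⁻¹ * r n = -1 := by field_simp [(hneg n).ne]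
  rw [smul_sub, smul_smul, this]
  module

lemma gerstewitz_ne_bot (hDsmul : ∀ α : ℝ, 0 ≤ α → α • D ⊆ D) (hk₀ : k₀ ∉ -vcl D) :
    gerstewitz D k₀ y ≠ ⊥ := by
  intro hbot
  have hlt (n : ℕ) : gerstewitz D k₀ y < ((-(n + 1) : ℝ) : EReal) := hbot ▸ EReal.bot_lt_coe _
  choose r hrn hmem using fun n => exists_smul_sub_mem_of_gerstewitz_lt (hlt n)
  have hr : Tendsto r atTop atBot :=
    tendsto_atBot_mono (fun n => (hrn n).le)
      (tendsto_neg_atTop_atBot.comp (tendsto_atTop_add_const_right _ 1 tendsto_natCast_atTop_atTop))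
  have hneg (n : ℕ) : r n < 0 := (hrn n).trans (neg_neg_of_pos (by positivity))
  exact hk₀ (Set.mem_neg.2 (neg_mem_vcl_of_tendsto_atBot hDsmul hr hneg hmem))

lemma gerstewitz_add_le_of_lt (hDadd : D + D ⊆ D) {y₁ y₂ : Y} {a b : ℝ}
    (ha : gerstewitz D k₀ y₁ < a) (hb : gerstewitz D k₀ y₂ < b) :
    gerstewitz D k₀ (y₁ + y₂) ≤ a + b := by
  obtain ⟨r₁, hr₁, h₁⟩ := exists_smul_sub_mem_of_gerstewitz_lt ha
  obtain ⟨r₂, hr₂, h₂⟩ := exists_smul_sub_mem_of_gerstewitz_lt hb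
  have hsum : (r₁ + r₂) • k₀ - (y₁ + y₂) ∈ D := by
    convert hDadd (Set.add_mem_add h₁ h₂) using 1
    module
  calc gerstewitz D k₀ (y₁ + y₂) ≤ (r₁ + r₂ : ℝ) := gerstewitz_le_of_smul_sub_mem hsum
    _ ≤ a + b := by exact_mod_cast (add_lt_add hr₁ hr₂).le

end

theorem gerstewitz_subadditive_general {Y : Type*} [AddCommGroup Y] [Module ℝ Y]
    (D : Set Y) (hDadd : D + D ⊆ D) (hDsmul : ∀ α : ℝ, 0 ≤ α → α • D ⊆ D)
    (k₀ : Y) (hk₀' : k₀ ∉ -vcl D) :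
    ∀ y₁ y₂ : Y, gerstewitz D k₀ (y₁ + y₂) ≤ gerstewitz D k₀ y₁ + gerstewitz D k₀ y₂ := by
  intro y₁ y₂
  have h₁ := gerstewitz_ne_bot (y := y₁) hDsmul hk₀'
  have h₂ := gerstewitz_ne_bot (y := y₂) hDsmul hk₀'
  refine EReal.le_add_of_forall_gt (.inl h₁) (.inr h₂) fun a ha b hb => ?_
  obtain ⟨a', ha', ha'a⟩ := EReal.lt_iff_exists_real_btwn.mp ha
  obtain ⟨b', hb', hb'b⟩ := EReal.lt_iff_exists_real_btwn.mp hb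
  calc gerstewitz D k₀ (y₁ + y₂) ≤ a' + b' := gerstewitz_add_le_of_lt hDadd ha' hb'
    _ ≤ a + b := add_le_add ha'a.le hb'b.le

/-- **Lemma 3.2 (vi).** The Gerstewitz function is subadditive. -/
theorem gerstewitz_subadditive {Y : Type*} [AddCommGroup Y] [Module ℝ Y]
    (D : Set Y) (hDadd : D + D ⊆ D) (hDsmul : ∀ α : ℝ, 0 ≤ α → α • D ⊆ D)
    (k₀ : Y) (hk₀ : k₀ ∈ D) (hk₀' : k₀ ∉ -vcl D) :
    ∀ y₁ y₂ : Y, gerstewitz D k₀ (y₁ + y₂) ≤ gerstewitz D k₀ y₁ + gerstewitz D k₀ y₂ :=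
  gerstewitz_subadditive_general D hDadd hDsmul k₀ hk₀'
end

section
/- Let Y be a real linear space, D a convex cone, k₀ ∈ D \ (−vcl(D)), and ξ_{k₀}(y) = inf{t : y ∈ tk₀ − D}. Then for y ∈ Y and r ∈ ℝ: ξ_{k₀}(y) < r iff y ∈ rk₀ − (D + (0,∞)k₀), and ξ_{k₀}(y) ≤ r iff y ∈ rk₀ − vcl_{k₀}(D). -/
/-!
Since `D + [0,∞) k₀ ⊆ D`, the set of `t` with `t k₀ - y ∈ D` is an up-set of `ℝ` whose infimum
is `ξ_{k₀}(y)`. So `ξ_{k₀}(y) < r` means that `t k₀ - y ∈ D` for some `t = r - s < r`, and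
`ξ_{k₀}(y) ≤ r` means that this happens for `t` arbitrarily close to `r` from above, i.e. that
`r k₀ - y + λ k₀ ∈ D` for arbitrarily small `λ ≥ 0`.
-/

open Pointwise Filter Topology

/-- The `k₀`-directional vector closure of a set `A`. -/
def vclDir {Y : Type*} [AddCommGroup Y] [Module ℝ Y] (k₀ : Y) (A : Set Y) : Set Y :=
  {y | ∃ lam : ℕ → ℝ, (∀ n, 0 ≤ lam n) ∧
    Tendsto lam atTop (nhds 0) ∧ ∀ n, y + lam n • k₀ ∈ A}

theorem EReal.le_coe_iff_forall_lt_coe {x : EReal} {r : ℝ} :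
    x ≤ r ↔ ∀ z : ℝ, r < z → x < z := by
  refine ⟨fun h z hz => h.trans_lt (EReal.coe_lt_coe_iff.2 hz), fun h => ?_⟩
  rw [← EReal.le_of_forall_lt_iff_le]
  exact fun z hz => (h z (EReal.coe_lt_coe_iff.1 hz)).le

section

variable {Y : Type*} [AddCommGroup Y] [Module ℝ Y]

theorem mem_vclDir_iff {k₀ x : Y} {A : Set Y} :
    x ∈ vclDir k₀ A ↔ ∀ ε > 0, ∃ lam : ℝ, 0 ≤ lam ∧ lam < ε ∧ x + lam • k₀ ∈ A := by
  constructor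
  · rintro ⟨lam, hlam0, hlim, hmem⟩ ε hε
    obtain ⟨n, hn⟩ := (hlim.eventually (eventually_lt_nhds hε)).exists
    exact ⟨lam n, hlam0 n, hn, hmem n⟩
  · intro h
    choose lam hlam0 hlam hmem using fun n : ℕ => h (1 / (n + 1)) (by positivity)
    exact ⟨lam, hlam0,
      squeeze_zero hlam0 (fun n => (hlam n).le) tendsto_one_div_add_atTop_nhds_zero_nat, hmem⟩

theorem add_smul_mem_of_cone {D : Set Y} (hDadd : D + D ⊆ D)
    (hDsmul : ∀ α : ℝ, 0 ≤ α → α • D ⊆ D) {k₀ : Y} (hk₀ : k₀ ∈ D) :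
    ∀ d ∈ D, ∀ c : ℝ, 0 ≤ c → d + c • k₀ ∈ D :=
  fun _ hd c hc => hDadd (Set.add_mem_add hd (hDsmul c hc (Set.smul_mem_smul_set hk₀)))

theorem gerstewitz_lt_coe_iff {D : Set Y} {k₀ y : Y} {r : ℝ} :
    gerstewitz D k₀ y < r ↔ ∃ t : ℝ, t < r ∧ t • k₀ - y ∈ D := by
  rw [gerstewitz, sInf_lt_iff]
  constructor
  · rintro ⟨_, ⟨t, rfl, hmem⟩, hlt⟩
    exact ⟨t, EReal.coe_lt_coe_iff.1 hlt, hmem⟩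
  · rintro ⟨t, ht, hmem⟩
    exact ⟨t, ⟨t, rfl, hmem⟩, EReal.coe_lt_coe_iff.2 ht⟩

theorem gerstewitz_le_coe_iff_mem_vclDir {D : Set Y} {k₀ : Y}
    (hD : ∀ d ∈ D, ∀ c : ℝ, 0 ≤ c → d + c • k₀ ∈ D) {y : Y} {r : ℝ} :
    gerstewitz D k₀ y ≤ r ↔ r • k₀ - y ∈ vclDir k₀ D := by
  rw [EReal.le_coe_iff_forall_lt_coe, mem_vclDir_iff]
  constructor
  · intro h ε hε
    obtain ⟨t, ht, hmem⟩ := gerstewitz_lt_coe_iff.1 (h (r + ε) (by linarith))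
    refine ⟨max (t - r) 0, le_max_right _ _, max_lt (by linarith) hε, ?_⟩
    have hshift : r • k₀ - y + max (t - r) 0 • k₀ = t • k₀ - y + (r + max (t - r) 0 - t) • k₀ := by
      module
    rw [hshift]
    exact hD _ hmem _ (by linarith [le_max_left (t - r) 0])
  · intro h z hz
    obtain ⟨lam, -, hlam, hmem⟩ := h (z - r) (sub_pos.2 hz)
    exact gerstewitz_lt_coe_iff.2 ⟨r + lam, by linarith, by convert hmem using 1; module⟩

end

theorem gerstewitz_sublevel_general {Y : Type*} [AddCommGroup Y] [Module ℝ Y]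
    (D : Set Y) (hDadd : D + D ⊆ D) (hDsmul : ∀ α : ℝ, 0 ≤ α → α • D ⊆ D)
    (k₀ : Y) (hk₀ : k₀ ∈ D) (y : Y) (r : ℝ) :
    (gerstewitz D k₀ y < (r : EReal) ↔
      ∃ d ∈ D, ∃ s : ℝ, 0 < s ∧ y = r • k₀ - (d + s • k₀)) ∧
    (gerstewitz D k₀ y ≤ (r : EReal) ↔ r • k₀ - y ∈ vclDir k₀ D) := by
  refine ⟨?_, gerstewitz_le_coe_iff_mem_vclDir (add_smul_mem_of_cone hDadd hDsmul hk₀)⟩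
  rw [gerstewitz_lt_coe_iff]
  constructor
  · rintro ⟨t, ht, hmem⟩
    exact ⟨_, hmem, r - t, sub_pos.2 ht, by module⟩
  · rintro ⟨d, hd, s, hs, rfl⟩
    exact ⟨r - s, by linarith, by convert hd using 1; module⟩

/-- **Lemma 3.2 (i), (ii).** Strict and non-strict sublevel sets of the Gerstewitz
function:  `ξ_{k₀}(y) < r ↔ y ∈ r k₀ - (D + (0,∞) k₀)` and
`ξ_{k₀}(y) ≤ r ↔ y ∈ r k₀ - vcl_{k₀}(D)`. -/
theorem gerstewitz_sublevel {Y : Type*} [AddCommGroup Y] [Module ℝ Y]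
    (D : Set Y) (hDadd : D + D ⊆ D) (hDsmul : ∀ α : ℝ, 0 ≤ α → α • D ⊆ D)
    (k₀ : Y) (hk₀ : k₀ ∈ D) (hk₀' : k₀ ∉ -vcl D) (y : Y) (r : ℝ) :
    (gerstewitz D k₀ y < (r : EReal) ↔
      ∃ d ∈ D, ∃ s : ℝ, 0 < s ∧ y = r • k₀ - (d + s • k₀)) ∧
    (gerstewitz D k₀ y ≤ (r : EReal) ↔ r • k₀ - y ∈ vclDir k₀ D) :=
  gerstewitz_sublevel_general D hDadd hDsmul k₀ hk₀ y r
end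

section
/- Let (X,d) be a metric space, Y a locally convex space, D ⊆ Y a convex cone, and k₀ ∈ D \ (−vcl(D)). Let f : X → nonempty subsets of Y be D-sequentially lower monotone and have D-k₀-closed values (f(x)+D is k₀-closed for all x). Suppose x₀ ∈ X and ε > 0 with f(x₀) ⊄ f(X) + εk₀ + D, and fix λ > 0; suppose (X,d) is S(x₀)-dynamically complete where S(x₀) = {x : f(x₀) ⊆ f(x) + (ε/λ)d(x,x₀)k₀ + D}. Then there exists x̂ ∈ X such that: (a) f(x₀) ⊆ f(x̂) + (ε/λ)d(x̂,x₀)k₀ + D; (b) for all x ≠ x̂, f(x̂) ⊄ f(x) + (ε/λ)d(x,x̂)k₀ + D; (c) d(x₀,x̂) ≤ λ. -/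
/-!
The sets `S x` are reflexive and transitive by the triangle inequality, and the non-domination
of `f x₀` by `f(X) + ε k₀ + D` caps the total length of any `S`-chain from `x₀` at `λ`. Choosing
each `x_{n+1} ∈ S xₙ` almost as far from `xₙ` as possible gives a Cauchy chain; its limit `x̂`
lies in every `S xₙ` by sequential lower monotonicity and `k₀`-closedness, and any `x ∈ S x̂`
is then within `d(x_{n+1}, xₙ) + 2⁻ⁿ → 0` of `xₙ`, so `x = x̂`.
-/

open Pointwise Filter Topology

section ConeShift

variable {Y : Type*} [AddCommGroup Y] {D : Set Y} {A B C : Set Y}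

lemma mem_add_singleton_add {y b : Y} : y ∈ A + {b} + D ↔ ∃ a ∈ A, ∃ d ∈ D, a + b + d = y := by
  simp only [Set.add_singleton, Set.mem_add, Set.mem_image]
  constructor
  · rintro ⟨_, ⟨a, ha, rfl⟩, d, hd, rfl⟩
    exact ⟨a, ha, d, hd, rfl⟩
  · rintro ⟨a, ha, d, hd, rfl⟩
    exact ⟨_, ⟨a, ha, rfl⟩, d, hd, rfl⟩

variable [Module ℝ Y] {k : Y}

lemma subset_add_smul_add_trans (hD : D + D ⊆ D) {a b : ℝ}
    (hAB : A ⊆ B + {a • k} + D) (hBC : B ⊆ C + {b • k} + D) :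
    A ⊆ C + {(b + a) • k} + D :=
  calc A ⊆ (C + {b • k} + D) + {a • k} + D := hAB.trans (by gcongr)
    _ = C + {(b + a) • k} + (D + D) := by rw [add_smul, ← Set.singleton_add_singleton]; abel
    _ ⊆ C + {(b + a) • k} + D := by gcongr

lemma subset_add_smul_add_of_le (hD : D + D ⊆ D) (hk : ∀ c : ℝ, 0 ≤ c → c • k ∈ D)
    {c c' : ℝ} (hc : c' ≤ c) (h : A ⊆ B + {c • k} + D) : A ⊆ B + {c' • k} + D :=
  calc A ⊆ B + {c' • k} + ({(c - c') • k} + D) := by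
        rwa [← add_assoc, add_assoc B, Set.singleton_add_singleton, ← add_smul, add_sub_cancel]
    _ ⊆ B + {c' • k} + (D + D) := by
        gcongr
        exact Set.singleton_subset_iff.2 (hk _ (sub_nonneg.2 hc))
    _ ⊆ B + {c' • k} + D := by gcongr

lemma add_zero_smul_add : B + {(0 : ℝ) • k} + D = B + D := by
  rw [zero_smul, Set.singleton_zero, add_zero]

lemma le_of_subset_add_smul_add {U : Set Y} {ε c : ℝ} (hD : D + D ⊆ D)
    (hk : ∀ c : ℝ, 0 ≤ c → c • k ∈ D) (hA : ¬ A ⊆ U + {ε • k} + D) (hBU : B ⊆ U)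
    (h : A ⊆ B + {c • k} + D) : c ≤ ε := by
  by_contra! hlt
  exact hA ((subset_add_smul_add_of_le hD hk hlt.le h).trans (by gcongr))

lemma subset_add_smul_add_of_tendsto (hcl : vclDir k (A + D) ⊆ A + D) {c : ℝ} {δ : ℕ → ℝ}
    (hδ0 : ∀ m, 0 ≤ δ m) (hδ : Tendsto δ atTop (𝓝 0))
    (h : ∀ m, B ⊆ A + {(c - δ m) • k} + D) : B ⊆ A + {c • k} + D := by
  intro y hy
  have hmem : y - c • k ∈ vclDir k (A + D) := by
    refine ⟨δ, hδ0, hδ, fun m => ?_⟩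
    obtain ⟨a, ha, d, hd, rfl⟩ := mem_add_singleton_add.1 (h m hy)
    convert Set.add_mem_add ha hd using 1
    rw [sub_smul]; abel
  obtain ⟨a, ha, d, hd, had⟩ := Set.mem_add.1 (hcl hmem)
  exact mem_add_singleton_add.2 ⟨a, ha, d, hd, by rw [add_right_comm, had, sub_add_cancel]⟩

end ConeShift

theorem exists_mem_forall_mem_eq_of_chains_converge {X : Type*} [MetricSpace X]
    (S : X → Set X) (x₀ : X) (refl : ∀ x, x ∈ S x) (trans : ∀ x y, y ∈ S x → S y ⊆ S x)
    (bdd : ∀ x ∈ S x₀, BddAbove ((dist · x) '' S x))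
    (lim : ∀ xs : ℕ → X, xs 0 = x₀ → (∀ n, xs (n + 1) ∈ S (xs n)) →
      ∃ u, Tendsto xs atTop (𝓝 u) ∧ ∀ n, u ∈ S (xs n)) :
    ∃ u ∈ S x₀, ∀ x ∈ S u, x = u := by
  have near_sup : ∀ (n : ℕ) (x : X), ∃ y ∈ S x,
      x ∈ S x₀ → ∀ z ∈ S x, dist z x ≤ dist y x + (1 / 2) ^ n := by
    intro n x
    by_cases hx : x ∈ S x₀
    · obtain ⟨_, ⟨y, hy, rfl⟩, hlt⟩ := exists_lt_of_lt_csSup (Set.Nonempty.image _ ⟨x, refl x⟩)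
        (sub_lt_self (sSup ((dist · x) '' S x)) (by positivity : (0 : ℝ) < (1 / 2) ^ n))
      refine ⟨y, hy, fun _ z hz => ?_⟩
      linarith [le_csSup (bdd x hx) ⟨z, hz, rfl⟩]
    · exact ⟨x, refl x, fun h => absurd h hx⟩
  choose g hgS hgmax using near_sup
  set xs : ℕ → X := fun n => Nat.rec x₀ g n
  have hstep : ∀ n, xs (n + 1) ∈ S (xs n) := fun n => hgS n (xs n)
  have hanti : Antitone (S ∘ xs) := antitone_nat_of_succ_le fun n => trans _ _ (hstep n)
  obtain ⟨u, hu, huS⟩ := lim xs rfl hstep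
  refine ⟨u, huS 0, fun x hx => tendsto_nhds_unique ?_ hu⟩
  have hclose : ∀ n, dist x (xs n) ≤ dist (xs (n + 1)) (xs n) + (1 / 2) ^ n := fun n =>
    hgmax n _ (hanti (Nat.zero_le n) (refl _)) x (trans _ _ (huS n) hx)
  have hstep0 : Tendsto (fun n => dist (xs (n + 1)) (xs n)) atTop (𝓝 0) := by
    simpa using (hu.comp (tendsto_add_atTop_nat 1)).dist hu
  have hbound : Tendsto (fun n => dist (xs (n + 1)) (xs n) + (1 / 2 : ℝ) ^ n) atTop (𝓝 0) := by
    have := tendsto_pow_atTop_nhds_zero_of_lt_one (r := (1 / 2 : ℝ)) (by norm_num) (by norm_num)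
    simpa using hstep0.add this
  refine tendsto_iff_dist_tendsto_zero.2 (squeeze_zero (fun _ => dist_nonneg) (fun n => ?_) hbound)
  rw [dist_comm]; exact hclose n

section EVPSet

variable {X Y : Type*} [MetricSpace X] [AddCommGroup Y] [Module ℝ Y] {D : Set Y} {k : Y}
  {f : X → Set Y} {γ : ℝ}

/-- The paper's `S(x)`, with slope `γ = ε / λ`. -/
def evpSet (D : Set Y) (k : Y) (f : X → Set Y) (γ : ℝ) (x : X) : Set X :=
  {x' | f x ⊆ f x' + {(γ * dist x' x) • k} + D}

lemma self_mem_evpSet (h0 : (0 : Y) ∈ D) (x : X) : x ∈ evpSet D k f γ x := by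
  change f x ⊆ f x + {(γ * dist x x) • k} + D
  rw [dist_self, mul_zero, add_zero_smul_add]
  exact Set.subset_add_left _ h0

lemma evpSet_subset (hD : D + D ⊆ D) (hk : ∀ c : ℝ, 0 ≤ c → c • k ∈ D) (hγ : 0 ≤ γ)
    {x x' : X} (h : x' ∈ evpSet D k f γ x) : evpSet D k f γ x' ⊆ evpSet D k f γ x := by
  intro z hz
  refine subset_add_smul_add_of_le hD hk ?_ (subset_add_smul_add_trans hD h hz)
  rw [← mul_add]
  exact mul_le_mul_of_nonneg_left (dist_triangle _ _ _) hγ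

lemma mul_dist_le_of_mem_evpSet (hD : D + D ⊆ D) (hk : ∀ c : ℝ, 0 ≤ c → c • k ∈ D)
    (hγ : 0 ≤ γ) {x₀ x z : X} {ε : ℝ} (hx₀ : ¬ f x₀ ⊆ (⋃ x, f x) + {ε • k} + D)
    (hx : x ∈ evpSet D k f γ x₀) (hz : z ∈ evpSet D k f γ x) : γ * dist z x ≤ ε := by
  have := le_of_subset_add_smul_add hD hk hx₀ (Set.subset_iUnion f z)
    (subset_add_smul_add_trans hD hx hz)
  linarith [mul_nonneg hγ (dist_nonneg (x := x) (y := x₀))]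

lemma subset_add_sum_dist_of_chain (hD : D + D ⊆ D) (h0 : (0 : Y) ∈ D) {xs : ℕ → X}
    (hstep : ∀ n, xs (n + 1) ∈ evpSet D k f γ (xs n)) (n : ℕ) :
    f (xs 0) ⊆ f (xs n) + {(γ * ∑ i ∈ Finset.range n, dist (xs (i + 1)) (xs i)) • k} + D := by
  induction n with
  | zero =>
    rw [Finset.sum_range_zero, mul_zero, add_zero_smul_add]
    exact Set.subset_add_left _ h0
  | succ n ih =>
    convert subset_add_smul_add_trans hD ih (hstep n) using 5
    rw [Finset.sum_range_succ]
    ring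

lemma cauchySeq_of_chain (hD : D + D ⊆ D) (hk : ∀ c : ℝ, 0 ≤ c → c • k ∈ D) (hγ : 0 < γ)
    {x₀ : X} {ε : ℝ} (hx₀ : ¬ f x₀ ⊆ (⋃ x, f x) + {ε • k} + D) {xs : ℕ → X} (h0 : xs 0 = x₀)
    (hstep : ∀ n, xs (n + 1) ∈ evpSet D k f γ (xs n)) : CauchySeq xs := by
  refine cauchySeq_of_summable_dist <|
    summable_of_sum_range_le (c := ε / γ) (fun _ => dist_nonneg) fun n => ?_
  have hbudget := le_of_subset_add_smul_add hD hk hx₀ (Set.subset_iUnion f (xs n))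
    (h0 ▸ subset_add_sum_dist_of_chain hD (by simpa using hk 0 le_rfl) hstep n)
  rw [le_div_iff₀' hγ]
  simpa only [dist_comm] using hbudget

/-- The `k`-closedness of `f u + D` absorbs the vanishing loss `γ * dist (xs m) u` in the shift. -/
lemma mem_evpSet_of_tendsto (hD : D + D ⊆ D) (hk : ∀ c : ℝ, 0 ≤ c → c • k ∈ D) (hγ : 0 ≤ γ)
    (hslm : ∀ (xs : ℕ → X) (xbar : X), (∀ n, f (xs n) ⊆ f (xs (n + 1)) + D) →
      Tendsto xs atTop (𝓝 xbar) → ∀ n, f (xs n) ⊆ f xbar + D)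
    (hcl : ∀ x, vclDir k (f x + D) ⊆ f x + D) {xs : ℕ → X} {u : X}
    (hstep : ∀ n, xs (n + 1) ∈ evpSet D k f γ (xs n)) (hu : Tendsto xs atTop (𝓝 u)) (n : ℕ) :
    u ∈ evpSet D k f γ (xs n) := by
  have hanti : Antitone (evpSet D k f γ ∘ xs) :=
    antitone_nat_of_succ_le fun n => evpSet_subset hD hk hγ (hstep n)
  have hlower : ∀ m, f (xs m) ⊆ f u + {(0 : ℝ) • k} + D := by
    simp_rw [add_zero_smul_add]
    refine hslm xs u (fun m => ?_) hu
    simpa only [add_zero_smul_add] using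
      subset_add_smul_add_of_le hD hk (mul_nonneg hγ dist_nonneg) (hstep m)
  have htail : Tendsto (fun m => dist (xs (m + n)) u) atTop (𝓝 0) :=
    tendsto_iff_dist_tendsto_zero.1 (hu.comp (tendsto_add_atTop_nat n))
  refine subset_add_smul_add_of_tendsto (hcl u) (δ := fun m => γ * dist (xs (m + n)) u)
    (fun _ => mul_nonneg hγ dist_nonneg) (by simpa using htail.const_mul γ) fun m => ?_
  have hmn : xs (m + n) ∈ evpSet D k f γ (xs n) :=
    hanti (Nat.le_add_left n m) (self_mem_evpSet (by simpa using hk 0 le_rfl) _)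
  refine subset_add_smul_add_of_le hD hk ?_ (subset_add_smul_add_trans hD hmn (hlower _))
  rw [zero_add, ← mul_sub]
  refine mul_le_mul_of_nonneg_left ?_ hγ
  linarith [dist_triangle u (xs (m + n)) (xs n), dist_comm u (xs (m + n))]

end EVPSet

theorem setvalued_EVP_k0closed_general {X Y : Type*} [MetricSpace X]
    [AddCommGroup Y] [Module ℝ Y]
    (D : Set Y) (hDadd : D + D ⊆ D) (hDsmul : ∀ α : ℝ, 0 ≤ α → α • D ⊆ D)
    (k₀ : Y) (hk₀ : k₀ ∈ D)
    (f : X → Set Y)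
    (hslm : ∀ (xs : ℕ → X) (xbar : X), (∀ n, f (xs n) ⊆ f (xs (n + 1)) + D) →
      Tendsto xs atTop (nhds xbar) → ∀ n, f (xs n) ⊆ f xbar + D)
    (hclv : ∀ x : X, vclDir k₀ (f x + D) ⊆ f x + D)
    (x₀ : X) (ε : ℝ) (hε : 0 < ε)
    (hx₀ : ¬ f x₀ ⊆ (⋃ x : X, f x) + {ε • k₀} + D)
    (lam : ℝ) (hlam : 0 < lam)
    (S : X → Set X)
    (hS : ∀ x, S x = {x' | f x ⊆ f x' + {((ε / lam) * dist x' x) • k₀} + D})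
    (hcomplete : ∀ xs : ℕ → X, (∀ n, xs n ∈ S x₀) →
      (∀ n, S (xs (n + 1)) ⊆ S (xs n)) → (∀ n, S (xs n) ⊆ S x₀) →
      CauchySeq xs → ∃ u : X, Tendsto xs atTop (nhds u)) :
    ∃ xhat : X,
      (f x₀ ⊆ f xhat + {((ε / lam) * dist xhat x₀) • k₀} + D) ∧
      (∀ x : X, x ≠ xhat → ¬ f xhat ⊆ f x + {((ε / lam) * dist x xhat) • k₀} + D) ∧
      dist x₀ xhat ≤ lam := by
  obtain rfl : S = evpSet D k₀ f (ε / lam) := funext hS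
  set S := evpSet D k₀ f (ε / lam)
  have hk : ∀ c : ℝ, 0 ≤ c → c • k₀ ∈ D := fun c hc => hDsmul c hc (Set.smul_mem_smul_set hk₀)
  have hγ : 0 < ε / lam := div_pos hε hlam
  have hscale : ∀ d, ε / lam * d ≤ ε → d ≤ lam := fun d h => by
    rwa [div_mul_eq_mul_div, div_le_iff₀ hlam, mul_le_mul_iff_right₀ hε] at h
  have hrefl := self_mem_evpSet (k := k₀) (f := f) (γ := ε / lam) (by simpa using hk 0 le_rfl)
  have htrans : ∀ x y, y ∈ S x → S y ⊆ S x := fun _ _ => evpSet_subset hDadd hk hγ.le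
  obtain ⟨u, hu₀, hu⟩ := exists_mem_forall_mem_eq_of_chains_converge S x₀ hrefl htrans
    (fun x hx => ⟨lam, by
      rintro _ ⟨z, hz, rfl⟩
      exact hscale _ (mul_dist_le_of_mem_evpSet hDadd hk hγ.le hx₀ hx hz)⟩)
    (fun xs h0 hstep => by
      have hanti : Antitone (S ∘ xs) := antitone_nat_of_succ_le fun n => htrans _ _ (hstep n)
      obtain ⟨u, hu⟩ := hcomplete xs (fun n => h0 ▸ hanti n.zero_le (hrefl _))
        (fun n => hanti n.le_succ) (fun n => h0 ▸ hanti n.zero_le)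
        (cauchySeq_of_chain hDadd hk hγ hx₀ h0 hstep)
      exact ⟨u, hu, mem_evpSet_of_tendsto hDadd hk hγ.le hslm hclv hstep hu⟩)
  refine ⟨u, hu₀, fun x hne hx => hne (hu x hx), ?_⟩
  rw [dist_comm]
  exact hscale _ (mul_dist_le_of_mem_evpSet hDadd hk hγ.le hx₀ (hrefl x₀) hu₀)

/-- **Corollary 3.6** ([41, Theorem 3.1] improved). -/
theorem setvalued_EVP_k0closed {X Y : Type*} [MetricSpace X]
    [AddCommGroup Y] [Module ℝ Y] [TopologicalSpace Y] [IsTopologicalAddGroup Y]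
    [ContinuousSMul ℝ Y] [LocallyConvexSpace ℝ Y]
    (D : Set Y) (hDadd : D + D ⊆ D) (hDsmul : ∀ α : ℝ, 0 ≤ α → α • D ⊆ D)
    (k₀ : Y) (hk₀ : k₀ ∈ D) (hk₀' : k₀ ∉ -vcl D)
    (f : X → Set Y) (hf : ∀ x, (f x).Nonempty)
    (hslm : ∀ (xs : ℕ → X) (xbar : X), (∀ n, f (xs n) ⊆ f (xs (n + 1)) + D) →
      Tendsto xs atTop (nhds xbar) → ∀ n, f (xs n) ⊆ f xbar + D)
    (hclv : ∀ x : X, vclDir k₀ (f x + D) ⊆ f x + D)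
    (x₀ : X) (ε : ℝ) (hε : 0 < ε)
    (hx₀ : ¬ f x₀ ⊆ (⋃ x : X, f x) + {ε • k₀} + D)
    (lam : ℝ) (hlam : 0 < lam)
    (S : X → Set X)
    (hS : ∀ x, S x = {x' | f x ⊆ f x' + {((ε / lam) * dist x' x) • k₀} + D})
    (hcomplete : ∀ xs : ℕ → X, (∀ n, xs n ∈ S x₀) →
      (∀ n, S (xs (n + 1)) ⊆ S (xs n)) → (∀ n, S (xs n) ⊆ S x₀) →
      CauchySeq xs → ∃ u : X, Tendsto xs atTop (nhds u)) :
    ∃ xhat : X,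
      (f x₀ ⊆ f xhat + {((ε / lam) * dist xhat x₀) • k₀} + D) ∧
      (∀ x : X, x ≠ xhat → ¬ f xhat ⊆ f x + {((ε / lam) * dist x xhat) • k₀} + D) ∧
      dist x₀ xhat ≤ lam :=
  setvalued_EVP_k0closed_general D hDadd hDsmul k₀ hk₀ f hslm hclv x₀ ε hε hx₀ lam hlam S hS
    hcomplete
end

section
/- Every set-valued map f : X → nonempty subsets of Y (X a metric space, Y a topological vector space, D a convex cone) whose epigraph epi f = {(x,y) : y ∈ f(x) + D} is closed in X × Y is D-sequentially lower monotone. Conversely, there exists a D-sequentially lower monotone set-valued map with D-closed values whose epigraph is not closed: with X = Y = ℝ, D = [0,∞), the map f(x) = [x+1, ∞) for x ≥ 0 and f(x) = {x} for x < 0 is D-s.l.m., has D-closed values, but epi f is not closed. -/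
/-!
Chaining the hypotheses `f (xₙ) ⊆ f (xₙ₊₁) + D` with `D + D ⊆ D` puts every `y ∈ f (xₙ)` into
`f (xₘ) + D` for all `m > n`, so `(xₘ, y)` lies in the epigraph and its limit `(x̄, y)` does too.

For the example, `exampleMap x + [0, ∞) = [g x, ∞)` with `g x = x + 1` for `x ≥ 0` and `g x = x`
for `x < 0`. Since `g` is strictly increasing, the hypothesis of `D`-s.l.m. says that `(xₙ)` is
nonincreasing, so `x̄ ≤ xₙ` and `g x̄ ≤ g xₙ`. The jump of `g` at `0` is what breaks closedness:
`(x, x)` lies in the epigraph for `x < 0` but `(0, 0)` does not.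
-/

open Pointwise Filter Topology

/-- `f` is `D`-sequentially lower monotone. -/
def DSLM {X Y : Type*} [TopologicalSpace X] [AddCommGroup Y]
    (D : Set Y) (f : X → Set Y) : Prop :=
  ∀ (xs : ℕ → X) (xbar : X), (∀ n, f (xs n) ⊆ f (xs (n + 1)) + D) →
    Tendsto xs atTop (nhds xbar) → ∀ n, f (xs n) ⊆ f xbar + D

/-- The example map of Example 4.1. -/
noncomputable def exampleMap (x : ℝ) : Set ℝ :=
  if 0 ≤ x then Set.Ici (x + 1) else {x}

open Set

def epigraph {X Y : Type*} [AddCommGroup Y] (D : Set Y) (f : X → Set Y) : Set (X × Y) :=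
  {p | p.2 ∈ f p.1 + D}

section ClosedEpigraph

variable {X Y : Type*} [AddCommGroup Y] {D : Set Y}

theorem subset_add_of_lt_of_forall_subset_succ_add (hD : D + D ⊆ D) {s : ℕ → Set Y}
    (hs : ∀ n, s n ⊆ s (n + 1) + D) {n m : ℕ} (hnm : n < m) : s n ⊆ s m + D := by
  induction m, hnm using Nat.le_induction with
  | base => exact hs n
  | succ m _ ih =>
    calc s n ⊆ s m + D := ih
      _ ⊆ s (m + 1) + D + D := add_subset_add_right (hs m)
      _ = s (m + 1) + (D + D) := add_assoc _ _ _
      _ ⊆ s (m + 1) + D := add_subset_add_left hD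

theorem DSLM.of_isClosed_epigraph [TopologicalSpace X] [TopologicalSpace Y] (hD : D + D ⊆ D)
    {f : X → Set Y} (hf : IsClosed (epigraph D f)) : DSLM D f := by
  intro xs xbar hchain hlim n y hy
  have hmem : ∀ᶠ m in atTop, (xs m, y) ∈ epigraph D f :=
    eventually_atTop.2 ⟨n + 1, fun m hm =>
      subset_add_of_lt_of_forall_subset_succ_add hD hchain (Nat.lt_of_succ_le hm) hy⟩
  exact hf.mem_of_tendsto (hlim.prodMk_nhds tendsto_const_nhds) hmem

end ClosedEpigraph

section OrderedValues

variable {α : Type*} [AddCommGroup α] [PartialOrder α] [IsOrderedAddMonoid α]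

theorem Set.Ici_add_Ici_zero (a : α) : Ici a + Ici (0 : α) = Ici a :=
  (add_zero a ▸ Ici_add_Ici_subset a 0).antisymm (subset_add_left _ self_mem_Ici)

theorem DSLM.of_add_Ici_zero_eq_Ici {X : Type*} [TopologicalSpace X] [LinearOrder X]
    [OrderClosedTopology X] {f : X → Set α} {g : X → α} (hg : StrictMono g)
    (hfg : ∀ x, f x + Ici 0 = Ici (g x)) : DSLM (Ici 0) f := by
  intro xs xbar hchain hlim n
  have hg_succ : ∀ m, g (xs (m + 1)) ≤ g (xs m) := fun m => Ici_subset_Ici.1 <|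
    calc Ici (g (xs m)) = f (xs m) + Ici 0 := (hfg _).symm
      _ ⊆ f (xs (m + 1)) + Ici 0 + Ici 0 := add_subset_add_right (hchain m)
      _ = Ici (g (xs (m + 1))) := by rw [hfg, Ici_add_Ici_zero]
  have hxs : Antitone xs := antitone_nat_of_succ_le fun m => hg.le_iff_le.1 (hg_succ m)
  calc f (xs n) ⊆ Ici (g (xs n)) := hfg (xs n) ▸ subset_add_left _ self_mem_Ici
    _ ⊆ Ici (g xbar) := Ici_subset_Ici.2 (hg.monotone (hxs.le_of_tendsto hlim n))
    _ = f xbar + Ici 0 := (hfg xbar).symm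

end OrderedValues

noncomputable def exampleMapMin (x : ℝ) : ℝ := if 0 ≤ x then x + 1 else x

theorem exampleMapMin_strictMono : StrictMono exampleMapMin := by
  intro a b hab
  unfold exampleMapMin
  split_ifs <;> grind

theorem exampleMap_add_Ici_zero (x : ℝ) : exampleMap x + Ici 0 = Ici (exampleMapMin x) := by
  unfold exampleMap exampleMapMin
  split_ifs
  · exact Ici_add_Ici_zero _
  · rw [singleton_add, image_const_add_Ici, add_zero]

theorem dslm_exampleMap : DSLM (Ici (0 : ℝ)) exampleMap :=
  .of_add_Ici_zero_eq_Ici exampleMapMin_strictMono exampleMap_add_Ici_zero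

theorem not_isClosed_epigraph_exampleMap : ¬ IsClosed (epigraph (Ici (0 : ℝ)) exampleMap) := by
  intro hcl
  have hdiag : ∀ᶠ x in 𝓝[<] (0 : ℝ), (x, x) ∈ epigraph (Ici 0) exampleMap :=
    eventually_nhdsWithin_of_forall fun x (hx : x < 0) => by
      simp [epigraph, exampleMap_add_Ici_zero, exampleMapMin, not_le.2 hx]
  have hzero := hcl.mem_of_tendsto
    (tendsto_nhdsWithin_of_tendsto_nhds (continuous_id.prodMk continuous_id).continuousAt) hdiag
  norm_num [epigraph, exampleMap_add_Ici_zero, exampleMapMin] at hzero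

/-- **Remark 4.2 and Example 4.1.** A closed epigraph implies `D`-sequential lower
monotonicity, but not conversely: the map `exampleMap` is `D`-s.l.m. with `D`-closed
values while its epigraph is not closed. -/
theorem closed_epigraph_implies_slm_and_counterexample :
    (∀ (X Y : Type*) [MetricSpace X] [AddCommGroup Y] [Module ℝ Y]
      [TopologicalSpace Y] [IsTopologicalAddGroup Y] [ContinuousSMul ℝ Y]
      (D : Set Y), D + D ⊆ D → (∀ α : ℝ, 0 ≤ α → α • D ⊆ D) →
      ∀ f : X → Set Y, (∀ x, (f x).Nonempty) →
        IsClosed {p : X × Y | p.2 ∈ f p.1 + D} → DSLM D f) ∧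
    (DSLM (Set.Ici (0 : ℝ)) exampleMap ∧
      (∀ x : ℝ, IsClosed (exampleMap x + Set.Ici (0 : ℝ))) ∧
      ¬ IsClosed {p : ℝ × ℝ | p.2 ∈ exampleMap p.1 + Set.Ici (0 : ℝ)}) :=
  ⟨fun _ _ _ _ _ _ _ _ _ hD _ _ _ hf => .of_isClosed_epigraph hD hf,
    dslm_exampleMap,
    fun x => exampleMap_add_Ici_zero x ▸ isClosed_Ici,
    not_isClosed_epigraph_exampleMap⟩
end

section
/- Let (X,d) be a complete metric space, x₀ ∈ X, Y a locally convex space, D a convex cone, H ⊆ D \ {0} a bounded convex set with 0 ∉ cl(H+D), and f : X → nonempty subsets of Y which is D-sequentially lower monotone and has (H,D)-closed values (f(x) + λH + D is closed for all x ∈ X, λ ≥ 0). Suppose there exists ξ ∈ Y* with inf ξ(H) > 0, ξ ≥ 0 on D, and ξ lower bounded on f(S(x₀)). Then for any γ > 0 there exists x̂ ∈ X such that: (a) f(x₀) ⊆ f(x̂) + γd(x̂,x₀)H + D; (b) for every x ≠ x̂, f(x̂) ⊄ f(x) + γd(x,x̂)H + D. -/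
open Pointwise Filter Topology

/-!
Scalarize by `φ x = inf ξ(f x)`. Since `ξ ≥ inf ξ(H) =: α > 0` on `H` and `ξ ≥ 0` on `D`, every
`x' ∈ S x` satisfies `φ x' + γ α d(x', x) ≤ φ x`, and the relation `x' ∈ S x` is reflexive and
transitive (convexity of `H` gives `sH + tH = (s + t)H`). This is the setting of the
Brezis–Browder ordering principle: choosing `x_{n+1} ∈ S x_n` that nearly minimises `φ` on
`S x_n` shrinks the sets `S x_n` to a point `x̂`. That `x̂` lies in every `S x_n` uses sequential
lower monotonicity and the closedness of `f x̂ + λH + D`: a point `y ∈ f x_n` lies in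
`f x̂ + μ_p H + D` with `μ_p → λ = γ d(x̂, x_n)`, and `y + (λ - μ_p)⁺ h₀`, for one fixed `h₀ ∈ H`,
lies in `f x̂ + λH + D` and tends to `y`.
-/

section OrderingPrinciple

variable {X : Type*} [MetricSpace X]

theorem exists_mem_forall_mem_dist_le_of_dist_le_sub {S : X → Set X}
    (hrefl : ∀ x, x ∈ S x) (htrans : ∀ x, ∀ y ∈ S x, S y ⊆ S x) {φ : X → ℝ} {x₀ : X}
    (hφbdd : BddBelow (φ '' S x₀)) (hφ : ∀ x ∈ S x₀, ∀ y ∈ S x, dist x y ≤ φ x - φ y)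
    {x : X} (hx : x ∈ S x₀) {ε : ℝ} (hε : 0 < ε) :
    ∃ y ∈ S x, ∀ z ∈ S y, dist y z ≤ ε := by
  have hsub : S x ⊆ S x₀ := htrans x₀ x hx
  obtain ⟨_, ⟨y, hy, rfl⟩, hlt⟩ :=
    exists_lt_of_csInf_lt (Set.nonempty_of_mem (Set.mem_image_of_mem φ (hrefl x)))
      (lt_add_of_pos_right (sInf (φ '' S x)) hε)
  refine ⟨y, hy, fun z hz => ?_⟩
  have hinf : sInf (φ '' S x) ≤ φ z :=
    csInf_le (hφbdd.mono (Set.image_mono hsub)) ⟨z, htrans x y hy hz, rfl⟩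
  linarith [hφ y (hsub hy) z hz]

theorem exists_mem_subset_singleton_of_dist_le_sub [CompleteSpace X] (S : X → Set X)
    (hrefl : ∀ x, x ∈ S x) (htrans : ∀ x, ∀ y ∈ S x, S y ⊆ S x) (φ : X → ℝ) (x₀ : X)
    (hφbdd : BddBelow (φ '' S x₀)) (hφ : ∀ x ∈ S x₀, ∀ y ∈ S x, dist x y ≤ φ x - φ y)
    (hclosed : ∀ (u : ℕ → X) (x : X), (∀ m n, m ≤ n → u n ∈ S (u m)) →
      Tendsto u atTop (𝓝 x) → ∀ n, x ∈ S (u n)) :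
    ∃ x ∈ S x₀, S x ⊆ {x} := by
  choose! g hgS hgdist using fun (n : ℕ) x (hx : x ∈ S x₀) =>
    exists_mem_forall_mem_dist_le_of_dist_le_sub hrefl htrans hφbdd hφ hx
      (pow_pos (one_half_pos (α := ℝ)) n)
  let u : ℕ → X := fun n => Nat.rec (g 0 x₀) (fun k x => g (k + 1) x) n
  have hu₀ : ∀ n, u n ∈ S x₀ := by
    intro n
    induction n with
    | zero => exact hgS 0 x₀ (hrefl x₀)
    | succ n ih => exact htrans x₀ (u n) ih (hgS (n + 1) (u n) ih)
  have hsucc : ∀ n, u (n + 1) ∈ S (u n) := fun n => hgS (n + 1) (u n) (hu₀ n)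
  have hsmall : ∀ n, ∀ a ∈ S (u n), ∀ b ∈ S (u n), dist a b ≤ 2 * (1 / 2) ^ n := by
    have hrad : ∀ n, ∀ z ∈ S (u n), dist (u n) z ≤ (1 / 2) ^ n := by
      rintro (_ | n)
      · exact hgdist 0 x₀ (hrefl x₀)
      · exact hgdist (n + 1) (u n) (hu₀ n)
    intro n a ha b hb
    linarith [dist_triangle_left a b (u n), hrad n a ha, hrad n b hb]
  have hchain : ∀ m n, m ≤ n → u n ∈ S (u m) := fun m n hmn => by
    induction n, hmn using Nat.le_induction with
    | base => exact hrefl (u m)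
    | succ n _ ih => exact htrans _ _ ih (hsucc n)
  have hlim : Tendsto (fun n => 2 * (1 / 2 : ℝ) ^ n) atTop (𝓝 0) := by
    simpa using (tendsto_pow_atTop_nhds_zero_of_lt_one (r := (1 / 2 : ℝ)) (by norm_num)
      (by norm_num)).const_mul 2
  obtain ⟨x, hx⟩ := cauchySeq_tendsto_of_complete <| cauchySeq_of_le_tendsto_0 _
    (fun n m N hn hm => hsmall N _ (hchain N n hn) _ (hchain N m hm)) hlim
  have hxS : ∀ n, x ∈ S (u n) := hclosed u x hchain hx
  refine ⟨x, htrans x₀ (u 0) (hu₀ 0) (hxS 0), fun y hy => ?_⟩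
  exact dist_le_zero.mp
    (ge_of_tendsto' hlim fun n => hsmall n y (htrans _ x (hxS n) hy) x (hxS n))

end OrderingPrinciple

section Cone

variable {Y : Type*} [AddCommGroup Y] {D H : Set Y}

theorem add_add_cone_subset (hDadd : D + D ⊆ D) (A : Set Y) : A + D + D ⊆ A + D := by
  rw [add_assoc]
  gcongr

variable [Module ℝ Y]

theorem smul_subset_cone (hDsmul : ∀ α : ℝ, 0 ≤ α → α • D ⊆ D) (hHD : H ⊆ D) {t : ℝ}
    (ht : 0 ≤ t) : t • H ⊆ D :=
  (Set.smul_set_mono hHD).trans (hDsmul t ht)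

theorem smul_add_cone_subset_of_le (hDadd : D + D ⊆ D) (hDsmul : ∀ α : ℝ, 0 ≤ α → α • D ⊆ D)
    (hHD : H ⊆ D) {s t : ℝ} (hst : s ≤ t) : t • H + D ⊆ s • H + D :=
  calc t • H + D = (s + (t - s)) • H + D := by rw [add_sub_cancel]
    _ ⊆ s • H + (t - s) • H + D := by gcongr; exact Set.add_smul_subset _ _ _
    _ ⊆ s • H + D + D := by gcongr; exact smul_subset_cone hDsmul hHD (sub_nonneg.2 hst)
    _ ⊆ s • H + D := add_add_cone_subset hDadd _

theorem add_smul_add_subset_add (hDadd : D + D ⊆ D) (hDsmul : ∀ α : ℝ, 0 ≤ α → α • D ⊆ D)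
    (hHD : H ⊆ D) (A : Set Y) {t : ℝ} (ht : 0 ≤ t) : A + t • H + D ⊆ A + D :=
  calc A + t • H + D ⊆ A + D + D := by gcongr; exact smul_subset_cone hDsmul hHD ht
    _ ⊆ A + D := add_add_cone_subset hDadd A

theorem add_smul_add_subset_of_subset_add (hDadd : D + D ⊆ D) {A B : Set Y} (hAB : A ⊆ B + D)
    (t : ℝ) : A + t • H + D ⊆ B + t • H + D :=
  calc A + t • H + D ⊆ B + D + t • H + D := by gcongr
    _ = B + t • H + D + D := by abel
    _ ⊆ B + t • H + D := add_add_cone_subset hDadd _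

theorem subset_add_smul_add_trans_s14 (hDadd : D + D ⊆ D) (hDsmul : ∀ α : ℝ, 0 ≤ α → α • D ⊆ D)
    (hHD : H ⊆ D) (hHconv : Convex ℝ H) {A B C : Set Y} {r s t : ℝ} (hs : 0 ≤ s) (ht : 0 ≤ t)
    (hrst : r ≤ t + s) (hAB : A ⊆ B + s • H + D) (hBC : B ⊆ C + t • H + D) :
    A ⊆ C + r • H + D :=
  calc A ⊆ C + t • H + D + s • H + D := hAB.trans (by gcongr)
    _ = C + (t + s) • H + D + D := by rw [hHconv.add_smul ht hs]; abel
    _ ⊆ C + (t + s) • H + D := add_add_cone_subset hDadd _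
    _ ⊆ C + r • H + D := by
      rw [add_assoc, add_assoc]
      exact Set.add_subset_add_left (smul_add_cone_subset_of_le hDadd hDsmul hHD hrst)

theorem add_max_sub_smul_mem (hDadd : D + D ⊆ D) (hDsmul : ∀ α : ℝ, 0 ≤ α → α • D ⊆ D)
    (hHD : H ⊆ D) (hHconv : Convex ℝ H) {A : Set Y} {μ lam : ℝ} (hμ : 0 ≤ μ) {y h : Y}
    (hy : y ∈ A + μ • H + D) (hh : h ∈ H) : y + max (lam - μ) 0 • h ∈ A + lam • H + D := by
  rcases le_total μ lam with hle | hle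
  · rw [max_eq_left (sub_nonneg.2 hle)]
    have hsplit : A + μ • H + D + (lam - μ) • H = A + lam • H + D := by
      rw [add_right_comm, add_assoc A, ← hHconv.add_smul hμ (sub_nonneg.2 hle), add_sub_cancel]
    exact hsplit ▸ Set.add_mem_add hy (Set.smul_mem_smul_set hh)
  · rw [max_eq_right (sub_nonpos.2 hle), zero_smul, add_zero]
    rw [add_assoc] at hy ⊢
    exact Set.add_subset_add_left (smul_add_cone_subset_of_le hDadd hDsmul hHD hle) hy

theorem csInf_image_add_mul_le (ξ : Y →ₗ[ℝ] ℝ) {α lam : ℝ} (hξH : ∀ h ∈ H, α ≤ ξ h)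
    (hξD : ∀ d ∈ D, 0 ≤ ξ d) (hlam : 0 ≤ lam) {A B : Set Y} (hA : A.Nonempty)
    (hB : BddBelow (ξ '' B)) (hAB : A ⊆ B + lam • H + D) :
    sInf (ξ '' B) + lam * α ≤ sInf (ξ '' A) := by
  refine le_csInf (hA.image ξ) ?_
  rintro _ ⟨y, hy, rfl⟩
  obtain ⟨_, ⟨b, hb, _, ⟨h, hh, rfl⟩, rfl⟩, d, hd, rfl⟩ := hAB hy
  rw [map_add, map_add, map_smul, smul_eq_mul]
  linarith [csInf_le hB ⟨b, hb, rfl⟩, mul_le_mul_of_nonneg_left (hξH h hh) hlam, hξD d hd]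

variable [TopologicalSpace Y] [IsTopologicalAddGroup Y] [ContinuousSMul ℝ Y]

theorem subset_add_smul_add_of_tendsto_s14 (hDadd : D + D ⊆ D)
    (hDsmul : ∀ α : ℝ, 0 ≤ α → α • D ⊆ D) (hHD : H ⊆ D) (hHconv : Convex ℝ H) (hH : H.Nonempty)
    {ι : Type*} {l : Filter ι} [l.NeBot] {A₀ B : Set Y} {A : ι → Set Y} {μ : ι → ℝ} {lam : ℝ}
    (hclosed : IsClosed (B + lam • H + D)) (hAB : ∀ i, A i ⊆ B + D) (hμ₀ : ∀ i, 0 ≤ μ i)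
    (hA₀ : ∀ᶠ i in l, A₀ ⊆ A i + μ i • H + D) (hμ : Tendsto μ l (𝓝 lam)) :
    A₀ ⊆ B + lam • H + D := by
  obtain ⟨h, hh⟩ := hH
  intro y hy
  have hmem : ∀ᶠ i in l, y + max (lam - μ i) 0 • h ∈ B + lam • H + D :=
    hA₀.mono fun i hi => add_max_sub_smul_mem hDadd hDsmul hHD hHconv (hμ₀ i)
      (add_smul_add_subset_of_subset_add hDadd (hAB i) (μ i) (hi hy)) hh
  have hcoef : Tendsto (fun i => max (lam - μ i) 0) l (𝓝 0) := by
    simpa using ((tendsto_const_nhds (x := lam)).sub hμ).max (tendsto_const_nhds (x := (0 : ℝ)))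
  have hlim : Tendsto (fun i => y + max (lam - μ i) 0 • h) l (𝓝 y) := by
    simpa using tendsto_const_nhds.add (hcoef.smul_const h)
  exact hclosed.mem_of_tendsto hlim hmem

end Cone

section PerturbedLowerSet

variable {X Y : Type*} [MetricSpace X] [AddCommGroup Y] [Module ℝ Y]

def perturbedLowerSet (D H : Set Y) (f : X → Set Y) (γ : ℝ) (x : X) : Set X :=
  {x' | f x ⊆ f x' + (γ * dist x' x) • H + D}

variable {D H : Set Y} {f : X → Set Y} {γ : ℝ}

theorem self_mem_perturbedLowerSet (hD : (0 : Y) ∈ D) (hH : H.Nonempty) (x : X) :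
    x ∈ perturbedLowerSet D H f γ x := by
  show f x ⊆ f x + (γ * dist x x) • H + D
  rw [dist_self, mul_zero, Set.zero_smul_set hH, add_zero]
  exact Set.subset_add_left _ hD

theorem perturbedLowerSet_subset (hDadd : D + D ⊆ D) (hDsmul : ∀ α : ℝ, 0 ≤ α → α • D ⊆ D)
    (hHD : H ⊆ D) (hHconv : Convex ℝ H) (hγ : 0 ≤ γ) {x y : X}
    (hy : y ∈ perturbedLowerSet D H f γ x) :
    perturbedLowerSet D H f γ y ⊆ perturbedLowerSet D H f γ x := fun z hz =>
  subset_add_smul_add_trans_s14 hDadd hDsmul hHD hHconv (mul_nonneg hγ dist_nonneg)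
    (mul_nonneg hγ dist_nonneg)
    (by rw [← mul_add]; exact mul_le_mul_of_nonneg_left (dist_triangle z y x) hγ) hy hz

theorem mem_perturbedLowerSet_of_tendsto [TopologicalSpace Y] [IsTopologicalAddGroup Y]
    [ContinuousSMul ℝ Y] (hDadd : D + D ⊆ D) (hDsmul : ∀ α : ℝ, 0 ≤ α → α • D ⊆ D)
    (hHD : H ⊆ D) (hHconv : Convex ℝ H) (hH : H.Nonempty) (hγ : 0 ≤ γ)
    (hslm : ∀ (xs : ℕ → X) (xbar : X), (∀ n, f (xs n) ⊆ f (xs (n + 1)) + D) →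
      Tendsto xs atTop (𝓝 xbar) → ∀ n, f (xs n) ⊆ f xbar + D)
    (hclv : ∀ x : X, ∀ lam : ℝ, 0 ≤ lam → IsClosed (f x + lam • H + D))
    (u : ℕ → X) (x : X) (hu : ∀ m n, m ≤ n → u n ∈ perturbedLowerSet D H f γ (u m))
    (hlim : Tendsto u atTop (𝓝 x)) (n : ℕ) : x ∈ perturbedLowerSet D H f γ (u n) := by
  have hsucc : ∀ p, f (u p) ⊆ f (u (p + 1)) + D := fun p =>
    (hu p (p + 1) p.le_succ).trans
      (add_smul_add_subset_add hDadd hDsmul hHD _ (mul_nonneg hγ dist_nonneg))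
  exact subset_add_smul_add_of_tendsto_s14 hDadd hDsmul hHD hHconv hH
    (μ := fun p => γ * dist (u p) (u n)) (hclv x _ (mul_nonneg hγ dist_nonneg))
    (hslm u x hsucc hlim) (fun p => mul_nonneg hγ dist_nonneg)
    (eventually_atTop.2 ⟨n, hu n⟩) ((hlim.dist tendsto_const_nhds).const_mul γ)

theorem dist_le_sub_of_mem_perturbedLowerSet (ξ : Y →ₗ[ℝ] ℝ) {α : ℝ}
    (hξH : ∀ h ∈ H, α ≤ ξ h) (hξD : ∀ d ∈ D, 0 ≤ ξ d) (hγ : 0 < γ) (hα : 0 < α) {x y : X}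
    (hfx : (f x).Nonempty) (hfy : BddBelow (ξ '' f y)) (hy : y ∈ perturbedLowerSet D H f γ x) :
    dist x y ≤ sInf (ξ '' f x) / (γ * α) - sInf (ξ '' f y) / (γ * α) := by
  have hle := csInf_image_add_mul_le ξ hξH hξD (mul_nonneg hγ.le dist_nonneg) hfx hfy hy
  rw [← sub_div, le_div_iff₀ (mul_pos hγ hα), dist_comm]
  linarith

end PerturbedLowerSet

theorem setvalued_EVP_bounded_H_general {X Y : Type*} [MetricSpace X] [CompleteSpace X]
    [AddCommGroup Y] [Module ℝ Y] [TopologicalSpace Y] [IsTopologicalAddGroup Y]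
    [ContinuousSMul ℝ Y]
    (D : Set Y) (hDadd : D + D ⊆ D) (hDsmul : ∀ α : ℝ, 0 ≤ α → α • D ⊆ D)
    (H : Set Y) (hHD : H ⊆ D \ {0}) (hHconv : Convex ℝ H)
    (f : X → Set Y) (hf : ∀ x, (f x).Nonempty)
    (hslm : ∀ (xs : ℕ → X) (xbar : X), (∀ n, f (xs n) ⊆ f (xs (n + 1)) + D) →
      Tendsto xs atTop (nhds xbar) → ∀ n, f (xs n) ⊆ f xbar + D)
    (hclv : ∀ x : X, ∀ lam : ℝ, 0 ≤ lam → IsClosed (f x + lam • H + D))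
    (x₀ : X) (γ : ℝ) (hγ : 0 < γ)
    (S : X → Set X)
    (hS : ∀ x, S x = {x' | f x ⊆ f x' + (γ * dist x' x) • H + D})
    (ξ : Y →L[ℝ] ℝ) (hξH : 0 < sInf (ξ '' H)) (hξD : ∀ d ∈ D, 0 ≤ ξ d)
    (hbd : ∃ c : ℝ, ∀ y ∈ ⋃ x ∈ S x₀, f x, c ≤ ξ y) :
    ∃ xhat : X,
      (f x₀ ⊆ f xhat + (γ * dist xhat x₀) • H + D) ∧
      (∀ x : X, x ≠ xhat → ¬ f xhat ⊆ f x + (γ * dist x xhat) • H + D) := by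
  obtain rfl : S = perturbedLowerSet D H f γ := funext hS
  obtain ⟨c, hc⟩ := hbd
  have hHD' : H ⊆ D := fun h hh => (hHD hh).1
  have hH : H.Nonempty := Set.nonempty_iff_ne_empty.2 fun hH => by simp [hH] at hξH
  have hD : (0 : Y) ∈ D := by
    obtain ⟨h, hh⟩ := hH
    simpa using hDsmul 0 le_rfl (Set.smul_mem_smul_set (hHD' hh))
  have htrans : ∀ x, ∀ y ∈ perturbedLowerSet D H f γ x,
      perturbedLowerSet D H f γ y ⊆ perturbedLowerSet D H f γ x := fun _ _ =>
    perturbedLowerSet_subset hDadd hDsmul hHD' hHconv hγ.le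
  have hξα : ∀ h ∈ H, sInf (ξ '' H) ≤ ξ h := fun h hh =>
    csInf_le ⟨0, Set.forall_mem_image.2 fun h' hh' => hξD h' (hHD' hh')⟩ ⟨h, hh, rfl⟩
  have hbdd : ∀ x ∈ perturbedLowerSet D H f γ x₀, ∀ y ∈ ξ '' f x, c ≤ y := fun x hx =>
    Set.forall_mem_image.2 fun y hy => hc y (Set.mem_biUnion hx hy)
  obtain ⟨xhat, hxhat, hsingle⟩ := exists_mem_subset_singleton_of_dist_le_sub _
    (self_mem_perturbedLowerSet hD hH) htrans (fun x => sInf (ξ '' f x) / (γ * sInf (ξ '' H))) x₀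
    ⟨c / (γ * sInf (ξ '' H)), Set.forall_mem_image.2 fun x hx =>
      div_le_div_of_nonneg_right (le_csInf ((hf x).image ξ) (hbdd x hx)) (by positivity)⟩
    (fun x hx y hy => dist_le_sub_of_mem_perturbedLowerSet ξ.toLinearMap hξα hξD hγ hξH (hf x)
      ⟨c, hbdd y (htrans x₀ x hx hy)⟩ hy)
    (mem_perturbedLowerSet_of_tendsto hDadd hDsmul hHD' hHconv hH hγ.le hslm hclv)
  exact ⟨xhat, hxhat, fun x hne hx => hne (hsingle hx)⟩

/-- **Theorem 4.2′.** Set-valued EVP with a bounded convex perturbation set and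
`(H,D)`-closed values. -/
theorem setvalued_EVP_bounded_H {X Y : Type*} [MetricSpace X] [CompleteSpace X]
    [AddCommGroup Y] [Module ℝ Y] [TopologicalSpace Y] [IsTopologicalAddGroup Y]
    [ContinuousSMul ℝ Y] [LocallyConvexSpace ℝ Y]
    (D : Set Y) (hDadd : D + D ⊆ D) (hDsmul : ∀ α : ℝ, 0 ≤ α → α • D ⊆ D)
    (H : Set Y) (hHD : H ⊆ D \ {0}) (hHconv : Convex ℝ H)
    (hHbdd : Bornology.IsVonNBounded ℝ H)
    (hB1 : (0 : Y) ∉ closure (H + D))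
    (f : X → Set Y) (hf : ∀ x, (f x).Nonempty)
    (hslm : ∀ (xs : ℕ → X) (xbar : X), (∀ n, f (xs n) ⊆ f (xs (n + 1)) + D) →
      Tendsto xs atTop (nhds xbar) → ∀ n, f (xs n) ⊆ f xbar + D)
    (hclv : ∀ x : X, ∀ lam : ℝ, 0 ≤ lam → IsClosed (f x + lam • H + D))
    (x₀ : X) (γ : ℝ) (hγ : 0 < γ)
    (S : X → Set X)
    (hS : ∀ x, S x = {x' | f x ⊆ f x' + (γ * dist x' x) • H + D})
    (ξ : Y →L[ℝ] ℝ) (hξH : 0 < sInf (ξ '' H)) (hξD : ∀ d ∈ D, 0 ≤ ξ d)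
    (hbd : ∃ c : ℝ, ∀ y ∈ ⋃ x ∈ S x₀, f x, c ≤ ξ y) :
    ∃ xhat : X,
      (f x₀ ⊆ f xhat + (γ * dist xhat x₀) • H + D) ∧
      (∀ x : X, x ≠ xhat → ¬ f xhat ⊆ f x + (γ * dist x xhat) • H + D) :=
  setvalued_EVP_bounded_H_general D hDadd hDsmul H hHD hHconv f hf hslm hclv x₀ γ hγ S hS ξ hξH hξD
    hbd
end

section
/- Let (X,d) be a metric space, Y a locally convex space, D ⊆ Y a convex cone, k₀ ∈ D \ (−vcl(D)) with D k₀-closed. Let f : X → nonempty subsets of Y be strongly D-sequentially lower monotone (D-lsca), with f(x) having the strict domination property for all x, and let (X,d) be strongly (f,D)-lower complete. Suppose (x₀,y₀) ∈ gr f and ε > 0 with y₀ ∉ f(X) + εk₀ + D. Then for any λ > 0 there exists (x̂,ŷ) ∈ gr f such that: (a) y₀ ∈ ŷ + (ε/λ)d(x̂,x₀)k₀ + D and ŷ ∈ SMin^D f(x̂); (b) for any (x,y) ∈ gr f \ {(x̂,ŷ)}, ŷ ∉ y + (ε/λ)d(x,x̂)k₀ + D; (c) d(x₀,x̂) ≤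 λ. -/
/-!
Order the graph of `f` by `p ≼ q ↔ q.2 - p.2 - γ d(p.1, q.1) k₀ ∈ D` with `γ = ε / λ`. Starting
at `(x₀, y₀)`, pick `q_{n+1} ≼ q_n` whose first coordinate is at least half as far from that of
`q_n` as any graph point below `q_n` (Dancs–Hegedüs–Medvegyev). Telescoping the chain and using
`y₀ ∉ f(X) + ε k₀ + D` gives `γ ∑ d(x_{n+1}, x_n) ≤ ε`, so `(x_n)` is Cauchy. Lower completeness
and lower monotonicity produce a limit `(u, ȳ)`, and `k₀`-closedness of `D` puts it below every
`q_n`; the lower sections of the `q_n` shrink to `u`, so every graph point below `(u, ȳ)` lies over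
`u`. A strict Pareto minimum `ŷ ≤ ȳ` of `f u` is the required point; the bound `γ d(u, x₀) ≤ ε`
is again the condition on `y₀`.
-/

open Pointwise Filter Topology

/-- `ybar` is a strict Pareto minimum of `B` with respect to the cone `D`. -/
def StrictParetoMin {Y : Type*} [AddCommGroup Y] (D : Set Y) (B : Set Y) (ybar : Y) : Prop :=
  ybar ∈ B ∧ ∀ y ∈ B, y ≠ ybar → ybar - y ∉ D

/-- `B` has the strict domination property with respect to `D`. -/
def StrictDomination {Y : Type*} [AddCommGroup Y] (D : Set Y) (B : Set Y) : Prop :=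
  ∀ y ∈ B, ∃ ybar : Y, StrictParetoMin D B ybar ∧ y - ybar ∈ D

def EkelandLE {X Y : Type*} [MetricSpace X] [AddCommGroup Y] [Module ℝ Y]
    (C : PointedCone ℝ Y) (k₀ : Y) (γ : ℝ) (p q : X × Y) : Prop :=
  q.2 - p.2 - (γ * dist p.1 q.1) • k₀ ∈ C

lemma Set.mem_singleton_add_singleton_add_iff {Y : Type*} [AddCommGroup Y] {S : Set Y}
    {a p q : Y} : a ∈ {p} + {q} + S ↔ a - p - q ∈ S := by
  rw [Set.singleton_add_singleton, Set.singleton_add]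
  constructor
  · rintro ⟨d, hd, rfl⟩
    simpa [sub_sub] using hd
  · intro h
    exact ⟨a - p - q, h, by beta_reduce; abel⟩

lemma exists_forall_le_two_mul {α : Type*} {S : Set α} {φ : α → ℝ} (hne : S.Nonempty)
    (hφ : ∀ a ∈ S, 0 ≤ φ a) (hbdd : BddAbove (φ '' S)) : ∃ b ∈ S, ∀ a ∈ S, φ a ≤ 2 * φ b := by
  have hle : ∀ a ∈ S, φ a ≤ sSup (φ '' S) := fun a ha => le_csSup hbdd ⟨a, ha, rfl⟩
  rcases le_or_gt (sSup (φ '' S)) 0 with hs | hs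
  · obtain ⟨b, hb⟩ := hne
    exact ⟨b, hb, fun a ha => by linarith [hle a ha, hφ b hb]⟩
  · obtain ⟨_, ⟨b, hb, rfl⟩, hlt⟩ :=
      exists_lt_of_lt_csSup (hne.image φ) (half_lt_self hs)
    exact ⟨b, hb, fun a ha => by linarith [hle a ha]⟩

lemma PointedCone.le_of_sub_smul_mem_of_notMem {Y : Type*} [AddCommGroup Y] [Module ℝ Y]
    {C : PointedCone ℝ Y} {A : Set Y} {k₀ y₀ y : Y} {c ε : ℝ} (hk₀ : k₀ ∈ C)
    (heff : y₀ ∉ A + {ε • k₀} + C) (hy : y ∈ A) (h : y₀ - y - c • k₀ ∈ C) : c ≤ ε := by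
  by_contra! hc
  have hsum := C.add_mem h (C.smul_mem (sub_nonneg.2 hc.le) hk₀)
  rw [show y₀ - y - c • k₀ + (c - ε) • k₀ = y₀ - (y + ε • k₀) by module] at hsum
  exact heff ⟨_, Set.add_mem_add hy rfl, _, hsum, add_sub_cancel _ _⟩

namespace EkelandLE

variable {X Y : Type*} [MetricSpace X] [AddCommGroup Y] [Module ℝ Y]
  {C : PointedCone ℝ Y} {k₀ : Y} {γ : ℝ}

@[refl]
lemma refl (p : X × Y) : EkelandLE C k₀ γ p p := by
  simp [EkelandLE]

lemma same_fst_iff {x : X} {y y' : Y} : EkelandLE C k₀ γ (x, y) (x, y') ↔ y' - y ∈ C := by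
  simp [EkelandLE]

lemma trans (hk₀ : k₀ ∈ C) (hγ : 0 ≤ γ) {p q r : X × Y} (hpq : EkelandLE C k₀ γ p q)
    (hqr : EkelandLE C k₀ γ q r) : EkelandLE C k₀ γ p r := by
  have hδ : 0 ≤ γ * (dist p.1 q.1 + dist q.1 r.1 - dist p.1 r.1) :=
    mul_nonneg hγ (by linarith [dist_triangle p.1 q.1 r.1])
  have hsum := C.add_mem (C.add_mem hqr hpq) (C.smul_mem hδ hk₀)
  unfold EkelandLE
  convert hsum using 1
  module

lemma sub_mem (hk₀ : k₀ ∈ C) (hγ : 0 ≤ γ) {p q : X × Y} (h : EkelandLE C k₀ γ p q) :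
    q.2 - p.2 ∈ C := by
  have hsum := C.add_mem h (C.smul_mem (mul_nonneg hγ (dist_nonneg (x := p.1) (y := q.1))) hk₀)
  rwa [sub_add_cancel] at hsum

end EkelandLE

/-- Strong `D`-sequential lower monotonicity (`D`-lsca) of a set-valued map. -/
def StronglySeqLowerMonotone {X Y : Type*} [TopologicalSpace X] [AddCommGroup Y]
    (D : Set Y) (f : X → Set Y) : Prop :=
  ∀ (xs : ℕ → X) (xbar : X) (ys : ℕ → Y), Tendsto xs atTop (𝓝 xbar) → (∀ n, ys n ∈ f (xs n)) →
    (∀ n, ys n - ys (n + 1) ∈ D) → ∃ ybar ∈ f xbar, ∀ n, ys n - ybar ∈ D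

/-- Strong `(f, D)`-lower completeness of the metric space `X`. -/
def StronglyLowerComplete {X Y : Type*} [PseudoMetricSpace X] [AddCommGroup Y]
    (D : Set Y) (f : X → Set Y) : Prop :=
  ∀ (xs : ℕ → X) (ys : ℕ → Y), (∀ n, ys n ∈ f (xs n)) → (∀ n, ys n - ys (n + 1) ∈ D) →
    CauchySeq xs → ∃ u : X, Tendsto xs atTop (𝓝 u)

section Ekeland

variable {X Y : Type*} [MetricSpace X] [AddCommGroup Y] [Module ℝ Y]
  {C : PointedCone ℝ Y} {k₀ : Y} {γ : ℝ} {f : X → Set Y}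

lemma EkelandLE.sub_sub_sum_dist_smul_mem {s : ℕ → X × Y}
    (hs : ∀ n, EkelandLE C k₀ γ (s (n + 1)) (s n)) (n : ℕ) :
    (s 0).2 - (s n).2 - (γ * ∑ k ∈ Finset.range n, dist (s (k + 1)).1 (s k).1) • k₀ ∈ C := by
  induction n with
  | zero => simp
  | succ n ih =>
    rw [Finset.sum_range_succ]
    convert C.add_mem ih (hs n) using 1
    module

lemma EkelandLE.of_tendsto (hk₀ : k₀ ∈ C) (hγ : 0 ≤ γ) (hC : vclDir k₀ (C : Set Y) ⊆ C)
    {s : ℕ → X × Y} {u : X} {y : Y} {p : X × Y} (hs : Tendsto (fun m => (s m).1) atTop (𝓝 u))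
    (hle : ∀ m, EkelandLE C k₀ γ (s m) p) (hy : ∀ m, (s m).2 - y ∈ C) :
    EkelandLE C k₀ γ (u, y) p := by
  apply hC
  refine ⟨fun m => γ * (dist u p.1 + dist (s m).1 u - dist (s m).1 p.1), fun m => ?_, ?_,
    fun m => ?_⟩
  · exact mul_nonneg hγ (by linarith [dist_triangle (s m).1 u p.1])
  · have hu : Tendsto (fun m => dist (s m).1 u) atTop (𝓝 0) := tendsto_iff_dist_tendsto_zero.1 hs
    have hp : Tendsto (fun m => dist (s m).1 p.1) atTop (𝓝 (dist u p.1)) :=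
      hs.dist tendsto_const_nhds
    simpa using (((tendsto_const_nhds (x := dist u p.1)).add hu).sub hp).const_mul γ
  · rw [SetLike.mem_coe]
    convert C.add_mem (C.add_mem (hle m) (hy m))
      (C.smul_mem (mul_nonneg hγ (dist_nonneg (x := (s m).1) (y := u))) hk₀) using 1
    module

variable {x₀ : X} {y₀ : Y} {M : ℝ}

lemma exists_ekelandLE_forall_dist_le_two_mul (hk₀ : k₀ ∈ C) (hγ : 0 < γ)
    (hbdd : ∀ x y, y ∈ f x → ∀ c : ℝ, y₀ - y - c • k₀ ∈ C → c ≤ M)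
    {p : X × Y} (hp : p.2 ∈ f p.1) (hp₀ : EkelandLE C k₀ γ p (x₀, y₀)) :
    ∃ q : X × Y, q.2 ∈ f q.1 ∧ EkelandLE C k₀ γ q p ∧
      ∀ r : X × Y, r.2 ∈ f r.1 → EkelandLE C k₀ γ r p → dist r.1 p.1 ≤ 2 * dist q.1 p.1 := by
  have hball : ∀ r : X × Y, r.2 ∈ f r.1 → EkelandLE C k₀ γ r (x₀, y₀) → dist r.1 x₀ ≤ M / γ :=
    fun r hr hr₀ => (le_div_iff₀' hγ).2 (hbdd r.1 r.2 hr _ hr₀)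
  let S := {r : X × Y | r.2 ∈ f r.1 ∧ EkelandLE C k₀ γ r p}
  have hS : BddAbove ((fun r : X × Y => dist r.1 p.1) '' S) := by
    refine ⟨M / γ + M / γ, ?_⟩
    rintro _ ⟨r, ⟨hr, hrp⟩, rfl⟩
    calc dist r.1 p.1 ≤ dist r.1 x₀ + dist p.1 x₀ := dist_triangle_right _ _ _
      _ ≤ M / γ + M / γ := add_le_add (hball r hr (hrp.trans hk₀ hγ.le hp₀)) (hball p hp hp₀)
  obtain ⟨q, ⟨hq, hqp⟩, hmax⟩ :=
    exists_forall_le_two_mul (S := S) ⟨p, hp, .refl p⟩ (fun _ _ => dist_nonneg) hS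
  exact ⟨q, hq, hqp, fun r hr hrp => hmax r ⟨hr, hrp⟩⟩

lemma exists_seq_ekelandLE (hk₀ : k₀ ∈ C) (hγ : 0 < γ)
    (hbdd : ∀ x y, y ∈ f x → ∀ c : ℝ, y₀ - y - c • k₀ ∈ C → c ≤ M) (hy₀ : y₀ ∈ f x₀) :
    ∃ s : ℕ → X × Y, s 0 = (x₀, y₀) ∧ ∀ n, (s n).2 ∈ f (s n).1 ∧
      EkelandLE C k₀ γ (s (n + 1)) (s n) ∧ ∀ r : X × Y, r.2 ∈ f r.1 →
        EkelandLE C k₀ γ r (s n) → dist r.1 (s n).1 ≤ 2 * dist (s (n + 1)).1 (s n).1 := by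
  let G := {p : X × Y | p.2 ∈ f p.1 ∧ EkelandLE C k₀ γ p (x₀, y₀)}
  have hstep : ∀ p : G, ∃ q : G, EkelandLE C k₀ γ (q : X × Y) p ∧ ∀ r : X × Y, r.2 ∈ f r.1 →
      EkelandLE C k₀ γ r p → dist r.1 (p : X × Y).1 ≤ 2 * dist (q : X × Y).1 (p : X × Y).1 := by
    rintro ⟨p, hp, hp₀⟩
    obtain ⟨q, hq, hqp, hmax⟩ := exists_ekelandLE_forall_dist_le_two_mul hk₀ hγ hbdd hp hp₀
    exact ⟨⟨q, hq, hqp.trans hk₀ hγ.le hp₀⟩, hqp, hmax⟩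
  choose g hg using hstep
  let t : ℕ → G := fun n => Nat.rec ⟨(x₀, y₀), hy₀, .refl _⟩ (fun _ p => g p) n
  exact ⟨fun n => (t n).1, rfl, fun n => ⟨(t n).2.1, hg (t n)⟩⟩

theorem exists_ekelandLE_forall_fst_eq (hk₀ : k₀ ∈ C) (hC : vclDir k₀ (C : Set Y) ⊆ C)
    (hγ : 0 < γ) (hlsca : StronglySeqLowerMonotone (C : Set Y) f)
    (hcomplete : StronglyLowerComplete (C : Set Y) f)
    (hbdd : ∀ x y, y ∈ f x → ∀ c : ℝ, y₀ - y - c • k₀ ∈ C → c ≤ M) (hy₀ : y₀ ∈ f x₀) :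
    ∃ u : X, ∃ y ∈ f u, EkelandLE C k₀ γ (u, y) (x₀, y₀) ∧
      ∀ r : X × Y, r.2 ∈ f r.1 → EkelandLE C k₀ γ r (u, y) → r.1 = u := by
  obtain ⟨s, hs0, hs⟩ := exists_seq_ekelandLE hk₀ hγ hbdd hy₀
  choose hsf hsucc hmax using hs
  have hsum : Summable fun k => dist (s (k + 1)).1 (s k).1 :=
    summable_of_sum_range_le (fun _ => dist_nonneg) fun n => (le_div_iff₀' hγ).2 <|
      hbdd _ _ (hsf n) _ (by simpa only [hs0] using EkelandLE.sub_sub_sum_dist_smul_mem hsucc n)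
  have hdec : ∀ n, (s n).2 - (s (n + 1)).2 ∈ C := fun n => (hsucc n).sub_mem hk₀ hγ.le
  obtain ⟨u, hu⟩ := hcomplete (fun n => (s n).1) (fun n => (s n).2) hsf hdec
    (cauchySeq_of_summable_dist (by simpa only [dist_comm] using hsum))
  obtain ⟨y, hy, hyle⟩ := hlsca _ u _ hu hsf hdec
  have hchain : ∀ n m, n ≤ m → EkelandLE C k₀ γ (s m) (s n) := fun n m hnm => by
    induction m, hnm using Nat.le_induction with
    | base => rfl
    | succ m _ ih => exact (hsucc m).trans hk₀ hγ.le ih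
  have hbelow : ∀ n, EkelandLE C k₀ γ (u, y) (s n) := fun n =>
    EkelandLE.of_tendsto hk₀ hγ.le hC (hu.comp (tendsto_add_atTop_nat n))
      (fun m => hchain n (m + n) (Nat.le_add_left n m)) (fun m => hyle (m + n))
  refine ⟨u, y, hy, hs0 ▸ hbelow 0, fun r hr hru => tendsto_nhds_unique ?_ hu⟩
  -- The lower sections of the `s n` shrink: their radii are at most twice the summable steps.
  refine tendsto_iff_dist_tendsto_zero.2 <| squeeze_zero (fun _ => dist_nonneg) (fun n => ?_)
    (by simpa using hsum.tendsto_atTop_zero.const_mul 2)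
  rw [dist_comm]
  exact hmax n r hr (hru.trans hk₀ hγ.le (hbelow n))

end Ekeland

theorem EVP_pareto_minimizer_general {X Y : Type*} [MetricSpace X]
    [AddCommGroup Y] [Module ℝ Y]
    (D : Set Y) (hDadd : D + D ⊆ D) (hDsmul : ∀ α : ℝ, 0 ≤ α → α • D ⊆ D)
    (k₀ : Y) (hk₀ : k₀ ∈ D) (hDk₀ : vclDir k₀ D ⊆ D)
    (f : X → Set Y)
    (hlsca : ∀ (xs : ℕ → X) (xbar : X) (ys : ℕ → Y),
      Tendsto xs atTop (nhds xbar) → (∀ n, ys n ∈ f (xs n)) →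
      (∀ n, ys n - ys (n + 1) ∈ D) →
      ∃ ybar ∈ f xbar, ∀ n, ys n - ybar ∈ D)
    (hdom : ∀ x : X, StrictDomination D (f x))
    (hcomplete : ∀ (xs : ℕ → X) (ys : ℕ → Y),
      (∀ n, ys n ∈ f (xs n)) → (∀ n, ys n - ys (n + 1) ∈ D) →
      CauchySeq xs → ∃ u : X, Tendsto xs atTop (nhds u))
    (x₀ : X) (y₀ : Y) (hy₀ : y₀ ∈ f x₀) (ε : ℝ) (hε : 0 < ε)
    (heff : y₀ ∉ (⋃ x : X, f x) + {ε • k₀} + D) :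
    ∀ lam : ℝ, 0 < lam → ∃ xhat : X, ∃ yhat : Y, yhat ∈ f xhat ∧
      (y₀ ∈ {yhat} + {((ε / lam) * dist xhat x₀) • k₀} + D ∧
        StrictParetoMin D (f xhat) yhat) ∧
      (∀ x : X, ∀ y : Y, y ∈ f x → (x, y) ≠ (xhat, yhat) →
        yhat ∉ {y} + {((ε / lam) * dist x xhat) • k₀} + D) ∧
      dist x₀ xhat ≤ lam := by
  intro lam hlam
  let C : PointedCone ℝ Y :=
    { carrier := D
      add_mem' := fun ha hb => hDadd (Set.add_mem_add ha hb)
      zero_mem' := by simpa using hDsmul 0 le_rfl (Set.smul_mem_smul_set hk₀)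
      smul_mem' := fun c _ hx => hDsmul c c.2 (Set.smul_mem_smul_set hx) }
  have hk : k₀ ∈ C := hk₀
  have hγ : 0 < ε / lam := div_pos hε hlam
  have hbdd : ∀ x y, y ∈ f x → ∀ c : ℝ, y₀ - y - c • k₀ ∈ C → c ≤ ε := fun x _ hy _ h =>
    PointedCone.le_of_sub_smul_mem_of_notMem hk heff (Set.mem_iUnion.2 ⟨x, hy⟩) h
  obtain ⟨u, ybar, hybar, hbelow, hmin⟩ :=
    exists_ekelandLE_forall_fst_eq hk hDk₀ hγ hlsca hcomplete hbdd hy₀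
  obtain ⟨yhat, hyhat, hyhat_le⟩ := hdom u ybar hybar
  have hhat_le : EkelandLE C k₀ (ε / lam) (u, yhat) (u, ybar) :=
    EkelandLE.same_fst_iff.2 hyhat_le
  have hhat : EkelandLE C k₀ (ε / lam) (u, yhat) (x₀, y₀) := hhat_le.trans hk hγ.le hbelow
  refine ⟨u, yhat, hyhat.1, ⟨Set.mem_singleton_add_singleton_add_iff.2 hhat, hyhat⟩, ?_, ?_⟩
  · intro x y hy hne hmem
    have hle : EkelandLE C k₀ (ε / lam) (x, y) (u, yhat) :=
      Set.mem_singleton_add_singleton_add_iff.1 hmem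
    obtain rfl : x = u := hmin (x, y) hy (hle.trans hk hγ.le hhat_le)
    exact hyhat.2 y hy (fun h => hne (h ▸ rfl)) (EkelandLE.same_fst_iff.1 hle)
  · have hdist := hbdd u yhat hyhat.1 _ hhat
    rw [div_mul_eq_mul_div, div_le_iff₀ hlam] at hdist
    rw [dist_comm]
    exact le_of_mul_le_mul_left hdist hε

/-- **Corollary 5.6.** A Pareto-minimizer version of the set-valued EVP. -/
theorem EVP_pareto_minimizer {X Y : Type*} [MetricSpace X]
    [AddCommGroup Y] [Module ℝ Y] [TopologicalSpace Y] [IsTopologicalAddGroup Y]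
    [ContinuousSMul ℝ Y] [LocallyConvexSpace ℝ Y]
    (D : Set Y) (hDadd : D + D ⊆ D) (hDsmul : ∀ α : ℝ, 0 ≤ α → α • D ⊆ D)
    (k₀ : Y) (hk₀ : k₀ ∈ D) (hk₀' : k₀ ∉ -vcl D) (hDk₀ : vclDir k₀ D ⊆ D)
    (f : X → Set Y) (hf : ∀ x, (f x).Nonempty)
    (hlsca : ∀ (xs : ℕ → X) (xbar : X) (ys : ℕ → Y),
      Tendsto xs atTop (nhds xbar) → (∀ n, ys n ∈ f (xs n)) →
      (∀ n, ys n - ys (n + 1) ∈ D) →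
      ∃ ybar ∈ f xbar, ∀ n, ys n - ybar ∈ D)
    (hdom : ∀ x : X, StrictDomination D (f x))
    (hcomplete : ∀ (xs : ℕ → X) (ys : ℕ → Y),
      (∀ n, ys n ∈ f (xs n)) → (∀ n, ys n - ys (n + 1) ∈ D) →
      CauchySeq xs → ∃ u : X, Tendsto xs atTop (nhds u))
    (x₀ : X) (y₀ : Y) (hy₀ : y₀ ∈ f x₀) (ε : ℝ) (hε : 0 < ε)
    (heff : y₀ ∉ (⋃ x : X, f x) + {ε • k₀} + D) :
    ∀ lam : ℝ, 0 < lam → ∃ xhat : X, ∃ yhat : Y, yhat ∈ f xhat ∧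
      (y₀ ∈ {yhat} + {((ε / lam) * dist xhat x₀) • k₀} + D ∧
        StrictParetoMin D (f xhat) yhat) ∧
      (∀ x : X, ∀ y : Y, y ∈ f x → (x, y) ≠ (xhat, yhat) →
        yhat ∉ {y} + {((ε / lam) * dist x xhat) • k₀} + D) ∧
      dist x₀ xhat ≤ lam :=
  EVP_pareto_minimizer_general D hDadd hDsmul k₀ hk₀ hDk₀ f hlsca hdom hcomplete x₀ y₀ hy₀ ε hε heff
end
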